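/- arXiv:1812.11567 — 7 statements merged into one kernel-verified Lean document; each statement's English description precedes it below -/
import Mathlib

section
/- Let X be a real Banach space, (Y,d) a complete metric space, and F : X ⇉ Y a set-valued map with closed values. For y ∈ Y set ψ_y(x) = d(y, F(x)) and assume each ψ_y is lower semicontinuous on X. Let (x̄,ȳ) ∈ Gr F and K > 0, and suppose there exists r > 0 such that for every x with ‖x−x̄‖ ≤ r and every y with d(y,ȳ) ≤ r satisfying y ∉ F(x), the function ψ_y is quasidifferentiable at x with quasidifferential [∂̲ψ_y(x), ∂̄ψ_y(x)] and there exists w* ∈ ∂̄ψ_y(x) such that inf{‖v* + w*‖_{X*} : v* ∈ ∂̲ψ_y(x)} > 1/K. Then for every such pair (x,y) with K·d(y,F(x)) < r − ‖x−x̄‖ one has d(x, F⁻¹(y)) ≤ K·d(y, F(x)); in particular, F is metrically regular near (x̄,ȳ) with norm of metric regularity not exceeding K. -/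
/-!
Fix `y`, write `ψ = d(y, F ·)` and let `K' > K`. Ekeland's variational principle applied to `ψ`
at `x` with slope `1 / K'` yields `z` with `‖z - x‖ ≤ K' ψ(x)` such that `ψ + ‖· - z‖ / K'` is
minimal at `z`, whence `ψ'(z; h) ≥ -‖h‖ / K'` for every direction `h`. If `y ∉ F z`, then
`∂̲ψ(z) + w` is weak* compact, convex and disjoint from the dual ball of radius `1 / K'`, which is
weak* compact by Banach–Alaoglu; separating the two produces an `h` with
`ψ'(z; h) ≤ max_{v ∈ ∂̲ψ(z)} ⟨v + w, h⟩ < -‖h‖ / K'`. So `y ∈ F z`, `d(x, F⁻¹ y) ≤ K' ψ(x)`, and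
`K' ↓ K` gives the estimate. For metric regularity, points where `K ψ(x) < r - ‖x - x̄‖` fails are
handled by going through `x̄`, on a ball of radius `r / (K + 2)`.
-/

open Filter Topology Set Pointwise

def HasDiniDeriv {X : Type*} [NormedAddCommGroup X] [NormedSpace ℝ X]
    (f : X → ℝ) (x : X) (f' : X → ℝ) : Prop :=
  ∀ h : X, Tendsto (fun t : ℝ => (f (x + t • h) - f x) / t) (𝓝[>] (0 : ℝ)) (𝓝 (f' h))

def WeakStarCompact {X : Type*} [NormedAddCommGroup X] [NormedSpace ℝ X]
    (A : Set (X →L[ℝ] ℝ)) : Prop :=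
  IsCompact ((fun v : X →L[ℝ] ℝ => (StrongDual.toWeakDual v : WeakDual ℝ X)) '' A)

/-- `[A, B]` is a quasidifferential of `f` at `x`, with Dini directional derivative `f'`. -/
def IsQuasidiff {X : Type*} [NormedAddCommGroup X] [NormedSpace ℝ X]
    (f : X → ℝ) (x : X) (f' : X → ℝ) (A B : Set (X →L[ℝ] ℝ)) : Prop :=
  A.Nonempty ∧ B.Nonempty ∧ Convex ℝ A ∧ Convex ℝ B ∧
    WeakStarCompact A ∧ WeakStarCompact B ∧ HasDiniDeriv f x f' ∧
    ∀ h : X, f' h = sSup ((fun v => v h) '' A) + sInf ((fun w => w h) '' B)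

/-- Distances to sets are taken in `ℝ≥0∞`, so that `d(·, ∅) = +∞`. -/
def MetricallyRegularWithNorm {X : Type*} [NormedAddCommGroup X] [NormedSpace ℝ X]
    {Y : Type*} [MetricSpace Y] (F : X → Set Y) (xb : X) (yb : Y) (K : ℝ) : Prop :=
  ∃ r > (0 : ℝ), ∀ x : X, ‖x - xb‖ ≤ r → ∀ y : Y, dist y yb ≤ r →
    EMetric.infEdist x {x' : X | y ∈ F x'} ≤ ENNReal.ofReal K * EMetric.infEdist y (F x)

open scoped ENNReal

section Ekeland

variable {α : Type*} [PseudoEMetricSpace α] {f : α → ℝ≥0∞} {ε : ℝ≥0∞} {u v w : α}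

def ekelandSet (f : α → ℝ≥0∞) (ε : ℝ≥0∞) (v : α) : Set α :=
  {u | f u + ε * edist u v ≤ f v}

theorem mem_ekelandSet_self (v : α) : v ∈ ekelandSet f ε v := by
  simp [ekelandSet]

theorem le_of_mem_ekelandSet (h : u ∈ ekelandSet f ε v) : f u ≤ f v :=
  le_self_add.trans h

theorem ekelandSet_subset_of_mem (h : u ∈ ekelandSet f ε v) :
    ekelandSet f ε u ⊆ ekelandSet f ε v := fun w (hw : f w + ε * edist w u ≤ f u) =>
  calc f w + ε * edist w v ≤ f w + ε * (edist w u + edist u v) := by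
        gcongr; exact edist_triangle _ _ _
    _ = (f w + ε * edist w u) + ε * edist u v := by ring
    _ ≤ f u + ε * edist u v := by gcongr
    _ ≤ f v := h

theorem isClosed_ekelandSet (hf : LowerSemicontinuous f) (hε : ε ≠ ⊤) (v : α) :
    IsClosed (ekelandSet f ε v) :=
  (hf.add ((ENNReal.continuous_const_mul hε).comp
    (continuous_id.edist continuous_const)).lowerSemicontinuous).isClosed_preimage (f v)

theorem exists_mem_ekelandSet_le_iInf_add {δ : ℝ≥0∞} (hδ : δ ≠ 0) (v : α) :
    ∃ w ∈ ekelandSet f ε v, f w ≤ (⨅ u ∈ ekelandSet f ε v, f u) + δ := by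
  by_cases htop : (⨅ u ∈ ekelandSet f ε v, f u) = ⊤
  · exact ⟨v, mem_ekelandSet_self v, by simp [htop]⟩
  obtain ⟨w, hlt⟩ := iInf_lt_iff.1 (ENNReal.lt_add_right htop hδ)
  obtain ⟨hw, hlt⟩ := iInf_lt_iff.1 hlt
  exact ⟨w, hw, hlt.le⟩

theorem edist_le_div_of_le_iInf_add {δ : ℝ≥0∞} (hε0 : ε ≠ 0) (hε : ε ≠ ⊤)
    (hw : w ∈ ekelandSet f ε v) (hwδ : f w ≤ (⨅ u ∈ ekelandSet f ε v, f u) + δ)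
    (hu : u ∈ ekelandSet f ε w) (hfu : f u ≠ ⊤) : edist u w ≤ δ / ε := by
  rw [ENNReal.le_div_iff_mul_le (.inl hε0) (.inl hε), mul_comm]
  have : f u + ε * edist u w ≤ f u + δ :=
    calc f u + ε * edist u w ≤ f w := hu
      _ ≤ (⨅ u ∈ ekelandSet f ε v, f u) + δ := hwδ
      _ ≤ f u + δ := by gcongr; exact biInf_le _ (ekelandSet_subset_of_mem hw hu)
  exact (ENNReal.add_le_add_iff_left hfu).1 this

end Ekeland

theorem LowerSemicontinuous.exists_ekeland_point {α : Type*} [EMetricSpace α] [CompleteSpace α]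
    {f : α → ℝ≥0∞} (hf : LowerSemicontinuous f) {ε : ℝ≥0∞} (hε0 : ε ≠ 0) (hε : ε ≠ ⊤)
    {x₀ : α} (hx₀ : f x₀ ≠ ⊤) :
    ∃ z ∈ ekelandSet f ε x₀, ∀ u, f z ≤ f u + ε * edist u z := by
  set S := ekelandSet f ε
  choose next hnext_mem hnext_le using fun n : ℕ =>
    exists_mem_ekelandSet_le_iInf_add (f := f) (ε := ε) (δ := 2⁻¹ ^ n) (by simp)
  let x : ℕ → α := fun n => Nat.rec x₀ next n
  have hS_anti : Antitone fun n => S (x n) :=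
    antitone_nat_of_succ_le fun n => ekelandSet_subset_of_mem (hnext_mem n (x n))
  have hfin : ∀ n, ∀ u ∈ S (x n), f u ≠ ⊤ := fun n u hu =>
    ne_top_of_le_ne_top hx₀ (le_of_mem_ekelandSet (hS_anti n.zero_le hu))
  have hsmall : ∀ n, ∀ u ∈ S (x (n + 1)), edist u (x (n + 1)) ≤ ε⁻¹ * 2⁻¹ ^ n := by
    intro n u hu
    rw [← ENNReal.div_eq_inv_mul]
    exact edist_le_div_of_le_iInf_add hε0 hε (hnext_mem n (x n)) (hnext_le n (x n)) hu
      (hfin (n + 1) u hu)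
  have hcauchy : CauchySeq x := by
    refine (cauchySeq_shift 1).1 (cauchySeq_of_edist_le_geometric 2⁻¹ ε⁻¹
      (ENNReal.inv_lt_one.2 ENNReal.one_lt_two) (ENNReal.inv_ne_top.2 hε0) fun n => ?_)
    rw [edist_comm]
    exact hsmall n _ (hnext_mem (n + 1) (x (n + 1)))
  obtain ⟨z, hz⟩ := cauchySeq_tendsto_of_complete hcauchy
  have hzS : ∀ n, z ∈ S (x n) := fun n =>
    (isClosed_ekelandSet hf hε _).mem_of_tendsto hz
      (eventually_atTop.2 ⟨n, fun m hm => hS_anti hm (mem_ekelandSet_self _)⟩)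
  refine ⟨z, hzS 0, fun u => ?_⟩
  by_cases hu : u ∈ S z
  · -- `S z` lies in every `S (x n)`, whose radii around `x n` tend to zero.
    have hxu : Tendsto (fun n => x (n + 1)) atTop (𝓝 u) := by
      have hgeom : Tendsto (fun n : ℕ => ε⁻¹ * 2⁻¹ ^ n) atTop (𝓝 0) := by
        simpa using ENNReal.Tendsto.const_mul (ENNReal.tendsto_pow_atTop_nhds_zero_of_lt_one
          (ENNReal.inv_lt_one.2 ENNReal.one_lt_two)) (.inr (ENNReal.inv_ne_top.2 hε0))
      refine tendsto_iff_edist_tendsto_0.2 (tendsto_of_tendsto_of_tendsto_of_le_of_le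
        tendsto_const_nhds hgeom (fun _ => zero_le) fun n => ?_)
      rw [edist_comm]
      exact hsmall n u (ekelandSet_subset_of_mem (hzS (n + 1)) hu)
    rw [tendsto_nhds_unique hxu ((tendsto_add_atTop_iff_nat 1).2 hz)]
    exact le_self_add
  · exact (not_le.1 hu).le

section Quasidiff

variable {X : Type*} [NormedAddCommGroup X] [NormedSpace ℝ X] {A C : Set (X →L[ℝ] ℝ)}

theorem WeakStarCompact.isCompact_image_apply (hA : WeakStarCompact A) (h : X) :
    IsCompact ((fun v : X →L[ℝ] ℝ => v h) '' A) := by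
  have := hA.image (WeakDual.eval_continuous h)
  rwa [image_image] at this

theorem WeakStarCompact.image_add_right (hA : WeakStarCompact A) (w : X →L[ℝ] ℝ) :
    WeakStarCompact ((· + w) '' A) := by
  have := hA.image (continuous_add_const (StrongDual.toWeakDual w))
  rw [image_image] at this
  rwa [WeakStarCompact, image_image]

theorem exists_forall_apply_le_lt_neg_mul_norm (hconv : Convex ℝ C) (hcomp : WeakStarCompact C)
    {ρ : ℝ} (hρ : 0 ≤ ρ) (hC : ∀ c ∈ C, ρ < ‖c‖) :
    ∃ h : X, ∃ s < -(ρ * ‖h‖), ∀ c ∈ C, c h ≤ s := by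
  have : LocallyConvexSpace ℝ (WeakDual ℝ X) := WeakBilin.locallyConvexSpace
  let ball : Set (WeakDual ℝ X) := WeakDual.toStrongDual ⁻¹' Metric.closedBall 0 ρ
  have hdisj : Disjoint (StrongDual.toWeakDual '' C) ball := by
    rw [disjoint_left]
    rintro _ ⟨c, hc, rfl⟩ hball
    exact (hC c hc).not_ge (by simpa [ball] using hball)
  obtain ⟨φ, s, t, hCs, hst, htball⟩ := geometric_hahn_banach_compact_closed
    (hconv.linear_image StrongDual.toWeakDual.toLinearMap) hcomp
    ((convex_closedBall 0 ρ).linear_preimage WeakDual.toStrongDual.toLinearMap)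
    (WeakDual.isCompact_closedBall 0 ρ).isClosed hdisj
  obtain ⟨h, rfl⟩ := LinearMap.dualEmbedding_surjective (topDualPairing ℝ X) φ
  obtain ⟨g, hg, hgh⟩ := exists_dual_vector'' ℝ h
  have hmem : StrongDual.toWeakDual (-(ρ • g)) ∈ ball := by
    simpa [ball, norm_smul, abs_of_nonneg hρ] using mul_le_of_le_one_right hρ hg
  have hval : WeakBilin.eval (topDualPairing ℝ X) h (StrongDual.toWeakDual (-(ρ • g))) =
      -(ρ * ‖h‖) := by
    change -(ρ • g) h = _
    simp [hgh]
  refine ⟨h, s, ?_, fun c hc => (hCs _ ⟨c, hc, rfl⟩).le⟩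
  linarith [hval ▸ htball _ hmem]

theorem IsQuasidiff.hasDiniDeriv {f f' : X → ℝ} {x : X} {B : Set (X →L[ℝ] ℝ)}
    (hq : IsQuasidiff f x f' A B) : HasDiniDeriv f x f' :=
  hq.2.2.2.2.2.2.1

theorem IsQuasidiff.exists_lt_neg_mul_norm {f f' : X → ℝ} {x : X} {B : Set (X →L[ℝ] ℝ)}
    (hq : IsQuasidiff f x f' A B) {w : X →L[ℝ] ℝ} (hw : w ∈ B) {ρ : ℝ} (hρ : 0 ≤ ρ)
    (hAw : ρ < sInf ((fun v => ‖v + w‖) '' A)) : ∃ h, f' h < -(ρ * ‖h‖) := by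
  obtain ⟨hAne, -, hAconv, -, hAcomp, hBcomp, -, hf'⟩ := hq
  have hnorm : ∀ c ∈ (· + w) '' A, ρ < ‖c‖ := by
    rintro _ ⟨v, hv, rfl⟩
    exact hAw.trans_le (csInf_le ⟨0, by rintro _ ⟨u, -, rfl⟩; positivity⟩ ⟨v, hv, rfl⟩)
  obtain ⟨h, s, hs, hCs⟩ := exists_forall_apply_le_lt_neg_mul_norm
    (by simpa only [add_comm] using hAconv.translate w) (hAcomp.image_add_right w) hρ hnorm
  have hA : sSup ((fun v : X →L[ℝ] ℝ => v h) '' A) ≤ s - w h :=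
    csSup_le (hAne.image _) <| by
      rintro _ ⟨v, hv, rfl⟩
      linarith [hCs (v + w) ⟨v, hv, rfl⟩, add_apply v w h]
  have hB : sInf ((fun v : X →L[ℝ] ℝ => v h) '' B) ≤ w h :=
    csInf_le (hBcomp.isCompact_image_apply h).bddBelow ⟨w, hw, rfl⟩
  exact ⟨h, by linarith [hf' h]⟩

end Quasidiff

section Dini

variable {X : Type*} [NormedAddCommGroup X] [NormedSpace ℝ X]

theorem HasDiniDeriv.tendsto_apply_add_smul {f f' : X → ℝ} {x : X} (hf : HasDiniDeriv f x f')
    (h : X) : Tendsto (fun t : ℝ => f (x + t • h)) (𝓝[>] 0) (𝓝 (f x)) := by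
  have hlim := ((tendsto_nhdsWithin_of_tendsto_nhds tendsto_id).mul (hf h)).const_add (f x)
  rw [zero_mul, add_zero] at hlim
  refine hlim.congr' (eventually_nhdsWithin_of_forall fun t (ht : 0 < t) => ?_)
  simp only [id]
  field_simp
  ring

theorem neg_mul_norm_le_of_forall_le_add_mul_edist {f : X → ℝ≥0∞} {f' : X → ℝ} {z : X}
    {c : ℝ} (hc : 0 ≤ c) (hmin : ∀ u, f z ≤ f u + ENNReal.ofReal c * edist u z)
    (hf : HasDiniDeriv (fun u => (f u).toReal) z f') (h : X) : -(c * ‖h‖) ≤ f' h := by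
  have hquot : ∀ t : ℝ, 0 < t → f (z + t • h) ≠ ⊤ →
      -(c * ‖h‖) ≤ ((f (z + t • h)).toReal - (f z).toReal) / t := by
    intro t ht hfin
    have hedist : edist (z + t • h) z = ENNReal.ofReal (t * ‖h‖) := by
      rw [edist_dist, dist_eq_norm, add_sub_cancel_left, norm_smul, Real.norm_of_nonneg ht.le]
    have := ENNReal.toReal_mono (by finiteness) (hmin (z + t • h))
    rw [hedist, ENNReal.toReal_add hfin (by finiteness), ENNReal.toReal_mul,
      ENNReal.toReal_ofReal hc, ENNReal.toReal_ofReal (by positivity)] at this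
    rw [le_div_iff₀ ht]
    nlinarith
  refine ge_of_tendsto (hf h) ?_
  rcases ENNReal.toReal_nonneg.eq_or_lt with hz0 | hzpos
  · -- the quotient is `(f (z + t • h)).toReal / t ≥ 0`, even where `f (z + t • h) = ⊤`
    filter_upwards [self_mem_nhdsWithin] with t (ht : 0 < t)
    rw [← hz0, sub_zero]
    exact (neg_nonpos.2 (by positivity)).trans (by positivity)
  · -- `f` is radially continuous at `z`, so `f (z + t • h)` stays finite for small `t > 0`
    filter_upwards [self_mem_nhdsWithin,
      (hf.tendsto_apply_add_smul h).eventually (eventually_gt_nhds hzpos)] with t ht hpos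
    exact hquot t ht (ENNReal.toReal_pos_iff.1 hpos).2.ne

end Dini

section ErrorBound

variable {X : Type*} [NormedAddCommGroup X] [NormedSpace ℝ X] [CompleteSpace X]
  {f : X → ℝ≥0∞} {T : Set X} {xb x : X} {K r : ℝ}

theorem infEDist_le_ofReal_mul_of_lt (hf : LowerSemicontinuous f) (hK : 0 < K) {K' : ℝ}
    (hKK' : K < K')
    (hquasi : ∀ z, ‖z - xb‖ ≤ r → z ∉ T → ∃ (f' : X → ℝ) (A B : Set (X →L[ℝ] ℝ)),
      IsQuasidiff (fun u => (f u).toReal) z f' A B ∧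
        ∃ w ∈ B, 1 / K < sInf ((fun v => ‖v + w‖) '' A))
    (hx : f x ≠ ⊤) (hxr : ‖x - xb‖ + K' * (f x).toReal ≤ r) :
    Metric.infEDist x T ≤ ENNReal.ofReal (K' * (f x).toReal) := by
  have hK' : 0 < K' := hK.trans hKK'
  obtain ⟨z, hzS, hz⟩ := hf.exists_ekeland_point (ε := ENNReal.ofReal (1 / K'))
    (by simpa using hK') ENNReal.ofReal_ne_top hx
  have hzx : edist z x ≤ ENNReal.ofReal (K' * (f x).toReal) := by
    have hεz : ENNReal.ofReal (1 / K') * edist z x ≤ ENNReal.ofReal (f x).toReal := by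
      rw [ENNReal.ofReal_toReal hx]
      exact le_add_self.trans hzS
    calc edist z x = ENNReal.ofReal K' * (ENNReal.ofReal (1 / K') * edist z x) := by
          rw [← mul_assoc, ← ENNReal.ofReal_mul hK'.le, mul_one_div_cancel hK'.ne',
            ENNReal.ofReal_one, one_mul]
      _ ≤ ENNReal.ofReal K' * ENNReal.ofReal (f x).toReal := by gcongr
      _ = ENNReal.ofReal (K' * (f x).toReal) := (ENNReal.ofReal_mul hK'.le).symm
  by_cases hzT : z ∈ T
  · exact (Metric.infEDist_le_edist_of_mem hzT).trans (edist_comm x z ▸ hzx)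
  have hzb : ‖z - xb‖ ≤ r := by
    rw [edist_dist, dist_eq_norm, ENNReal.ofReal_le_ofReal_iff (by positivity)] at hzx
    calc ‖z - xb‖ ≤ ‖z - x‖ + ‖x - xb‖ := norm_sub_le_norm_sub_add_norm_sub z x xb
      _ ≤ r := by linarith
  obtain ⟨f', A, B, hq, w, hw, hAw⟩ := hquasi z hzb hzT
  obtain ⟨h, hh⟩ := hq.exists_lt_neg_mul_norm hw (by positivity)
    ((one_div_lt_one_div_of_lt hK hKK').trans hAw)
  exact absurd (neg_mul_norm_le_of_forall_le_add_mul_edist (by positivity) hz hq.hasDiniDeriv h)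
    hh.not_ge

theorem infEDist_le_ofReal_mul (hf : LowerSemicontinuous f) (hK : 0 < K)
    (hquasi : ∀ z, ‖z - xb‖ ≤ r → z ∉ T → ∃ (f' : X → ℝ) (A B : Set (X →L[ℝ] ℝ)),
      IsQuasidiff (fun u => (f u).toReal) z f' A B ∧
        ∃ w ∈ B, 1 / K < sInf ((fun v => ‖v + w‖) '' A))
    (hx : ENNReal.ofReal K * f x < ENNReal.ofReal (r - ‖x - xb‖)) :
    Metric.infEDist x T ≤ ENNReal.ofReal K * f x := by
  have hfx : f x ≠ ⊤ := by
    rintro h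
    simp [h, hK] at hx
  rw [← ENNReal.ofReal_toReal hfx, ← ENNReal.ofReal_mul hK.le] at hx ⊢
  have hKd : K * (f x).toReal < r - ‖x - xb‖ :=
    (ENNReal.ofReal_lt_ofReal_iff_of_nonneg (by positivity)).1 hx
  have hlim := (continuous_mul_const (f x).toReal).tendsto K
  refine ge_of_tendsto
    (ENNReal.tendsto_ofReal (hlim.mono_left (nhdsWithin_le_nhds (s := Ioi K)))) ?_
  filter_upwards [self_mem_nhdsWithin,
    nhdsWithin_le_nhds (hlim.eventually (eventually_lt_nhds hKd))] with K' (hKK' : K < K') hK'd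
  exact infEDist_le_ofReal_mul_of_lt hf hK hKK' hquasi hfx (by linarith)

end ErrorBound

section Regularity

variable {X : Type*} [NormedAddCommGroup X] [NormedSpace ℝ X] {Y : Type*} [MetricSpace Y]

theorem metricallyRegularWithNorm_of_forall_lt {F : X → Set Y} {xb : X} {yb : Y}
    (hgraph : yb ∈ F xb) {K r : ℝ} (hK : 0 ≤ K) (hr : 0 < r)
    (hloc : ∀ x : X, ‖x - xb‖ ≤ r → ∀ y : Y, dist y yb ≤ r →
      ENNReal.ofReal K * Metric.infEDist y (F x) < ENNReal.ofReal (r - ‖x - xb‖) →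
      Metric.infEDist x {x' : X | y ∈ F x'} ≤ ENNReal.ofReal K * Metric.infEDist y (F x)) :
    MetricallyRegularWithNorm F xb yb K := by
  set ρ := r / (K + 2)
  have hρ : 0 < ρ := by positivity
  have hρr : (K + 2) * ρ = r := mul_div_cancel₀ r (by positivity)
  refine ⟨ρ, hρ, fun x hx y hy => ?_⟩
  have hyr : dist y yb ≤ r := by nlinarith
  by_cases hlt : ENNReal.ofReal K * Metric.infEDist y (F x) < ENNReal.ofReal (r - ‖x - xb‖)
  · exact hloc x (by nlinarith) y hyr hlt
  have hKyb : ENNReal.ofReal K * Metric.infEDist y (F xb) ≤ ENNReal.ofReal (K * ρ) := by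
    rw [ENNReal.ofReal_mul hK]
    gcongr
    exact (Metric.infEDist_le_edist_of_mem hgraph).trans
      (edist_dist y yb ▸ ENNReal.ofReal_le_ofReal hy)
  have hxb := hloc xb (by simp [hr.le]) y hyr (hKyb.trans_lt (by
    rw [sub_self, norm_zero, sub_zero, ENNReal.ofReal_lt_ofReal_iff hr]
    nlinarith))
  calc Metric.infEDist x {x' : X | y ∈ F x'}
      ≤ edist x xb + Metric.infEDist xb {x' : X | y ∈ F x'} :=
        Metric.infEDist_le_edist_add_infEDist
    _ ≤ ENNReal.ofReal ρ + ENNReal.ofReal (K * ρ) := by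
        gcongr
        · rw [edist_dist, dist_eq_norm]
          exact ENNReal.ofReal_le_ofReal hx
        · exact hxb.trans hKyb
    _ = ENNReal.ofReal (r - ρ) := by
        rw [← ENNReal.ofReal_add hρ.le (by positivity)]
        congr 1
        linarith
    _ ≤ ENNReal.ofReal (r - ‖x - xb‖) := ENNReal.ofReal_le_ofReal (by linarith)
    _ ≤ ENNReal.ofReal K * Metric.infEDist y (F x) := not_lt.1 hlt

end Regularity

theorem metric_regularity_of_quasidiff_condition_general
    {X : Type*} [NormedAddCommGroup X] [NormedSpace ℝ X] [CompleteSpace X]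
    {Y : Type*} [MetricSpace Y]
    (F : X → Set Y)
    (hlsc : ∀ y : Y, LowerSemicontinuous (fun u : X => EMetric.infEdist y (F u)))
    (xb : X) (yb : Y) (hgraph : yb ∈ F xb)
    (K : ℝ) (hK : 0 < K) (r : ℝ) (hr : 0 < r)
    (hmain : ∀ x : X, ‖x - xb‖ ≤ r → ∀ y : Y, dist y yb ≤ r → y ∉ F x →
      ∃ (ψ' : X → ℝ) (A B : Set (X →L[ℝ] ℝ)),
        IsQuasidiff (fun u : X => (EMetric.infEdist y (F u)).toReal) x ψ' A B ∧
        ∃ w ∈ B, 1 / K < sInf ((fun v => ‖v + w‖) '' A)) :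
    (∀ x : X, ‖x - xb‖ ≤ r → ∀ y : Y, dist y yb ≤ r →
      ENNReal.ofReal K * EMetric.infEdist y (F x) < ENNReal.ofReal (r - ‖x - xb‖) →
      EMetric.infEdist x {x' : X | y ∈ F x'} ≤ ENNReal.ofReal K * EMetric.infEdist y (F x)) ∧
    MetricallyRegularWithNorm F xb yb K := by
  have hloc : ∀ x : X, ‖x - xb‖ ≤ r → ∀ y : Y, dist y yb ≤ r →
      ENNReal.ofReal K * EMetric.infEdist y (F x) < ENNReal.ofReal (r - ‖x - xb‖) →
      EMetric.infEdist x {x' : X | y ∈ F x'} ≤ ENNReal.ofReal K * EMetric.infEdist y (F x) :=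
    fun x _ y hy hx =>
      infEDist_le_ofReal_mul (hlsc y) hK (fun z hz hzT => hmain z hz y hy hzT) hx
  exact ⟨hloc, metricallyRegularWithNorm_of_forall_lt hgraph hK.le hr hloc⟩

/-- sufficient condition for metric regularity of a closed-valued multifunction
in terms of quasidifferentials of the distance functions `ψ_y = d(y, F(·))`. -/
theorem metric_regularity_of_quasidiff_condition
    {X : Type*} [NormedAddCommGroup X] [NormedSpace ℝ X] [CompleteSpace X]
    {Y : Type*} [MetricSpace Y] [CompleteSpace Y]
    (F : X → Set Y) (hFclosed : ∀ x : X, IsClosed (F x))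
    (hlsc : ∀ y : Y, LowerSemicontinuous (fun u : X => EMetric.infEdist y (F u)))
    (xb : X) (yb : Y) (hgraph : yb ∈ F xb)
    (K : ℝ) (hK : 0 < K) (r : ℝ) (hr : 0 < r)
    (hmain : ∀ x : X, ‖x - xb‖ ≤ r → ∀ y : Y, dist y yb ≤ r → y ∉ F x →
      ∃ (ψ' : X → ℝ) (A B : Set (X →L[ℝ] ℝ)),
        IsQuasidiff (fun u : X => (EMetric.infEdist y (F u)).toReal) x ψ' A B ∧
        ∃ w ∈ B, 1 / K < sInf ((fun v => ‖v + w‖) '' A)) :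
    (∀ x : X, ‖x - xb‖ ≤ r → ∀ y : Y, dist y yb ≤ r →
      ENNReal.ofReal K * EMetric.infEdist y (F x) < ENNReal.ofReal (r - ‖x - xb‖) →
      EMetric.infEdist x {x' : X | y ∈ F x'} ≤ ENNReal.ofReal K * EMetric.infEdist y (F x)) ∧
    MetricallyRegularWithNorm F xb yb K :=
  metric_regularity_of_quasidiff_condition_general F hlsc xb yb hgraph K hK r hr hmain
end

section
/- Let X be a real Banach space, f quasidifferentiable at x with quasidifferential [A, B], and K > 0. Then there exists w ∈ B with inf{‖v + w‖_{X*} : v ∈ A} > 1/K if and only if there exists h ∈ X with ‖h‖ = 1 and f'(x,h) < −1/K. Consequently, the validity of the first condition does not depend on the choice of the quasidifferential [A,B] of f at x. -/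
/-!
Write `f'(x,h) = σ_A(h) + ι_B(h)` with `σ_A(h) = sup_{v∈A} v h` and `ι_B(h) = inf_{w∈B} w h`.
If `f'(x,h) < -1/K` for a unit vector `h`, take `w ∈ B` attaining `ι_B(h)` (weak* compactness);
then `‖v + w‖ ≥ -(v + w) h ≥ -f'(x,h) > 1/K` for every `v ∈ A`.
Conversely, if `A + w` avoids the closed ball of radius `r > 1/K`, separate this convex
weak*-compact set from the (weak*-closed) ball. Functionals continuous for the weak* topology are
evaluations at points of `X`, so after normalisation this gives a unit `h` with `(v + w) h < -r`
on `A`, whence `f'(x,h) ≤ σ_A(h) + w h ≤ -r`.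
Both conditions thus only involve `f'(x,·)`, which does not depend on the quasidifferential.
-/

open Filter Topology Set Pointwise

theorem WeakDual.exists_eq_eval {𝕜 X : Type*} [NontriviallyNormedField 𝕜] [NormedAddCommGroup X]
    [NormedSpace 𝕜 X] (φ : StrongDual 𝕜 (WeakDual 𝕜 X)) :
    ∃ h : X, ∀ u : WeakDual 𝕜 X, φ u = u h :=
  let ⟨h, hh⟩ := LinearMap.dualEmbedding_surjective (topDualPairing 𝕜 X) φ
  ⟨h, fun u => by rw [← hh]; rfl⟩

instance WeakDual.instLocallyConvexSpace {X : Type*} [NormedAddCommGroup X] [NormedSpace ℝ X] :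
    LocallyConvexSpace ℝ (WeakDual ℝ X) :=
  WeakBilin.locallyConvexSpace

section

variable {X : Type*} [NormedAddCommGroup X] [NormedSpace ℝ X]

namespace WeakStarCompact

variable {S : Set (StrongDual ℝ X)}

theorem isCompact_image_eval (hS : WeakStarCompact S) (h : X) :
    IsCompact ((fun v : StrongDual ℝ X => v h) '' S) := by
  have := hS.image (WeakDual.eval_continuous h)
  rwa [image_image] at this

theorem image_add_right_s2 (hS : WeakStarCompact S) (w : StrongDual ℝ X) :
    WeakStarCompact ((· + w) '' S) := by
  simpa only [WeakStarCompact, image_image, map_add] using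
    hS.image (continuous_add_const (StrongDual.toWeakDual w))

end WeakStarCompact

theorem exists_norm_eq_one_forall_apply_lt_neg {C : Set (StrongDual ℝ X)} (hne : C.Nonempty)
    (hconv : Convex ℝ C) (hC : WeakStarCompact C) {r : ℝ} (hr : 0 ≤ r)
    (hrC : ∀ u ∈ C, r < ‖u‖) : ∃ h : X, ‖h‖ = 1 ∧ ∀ u ∈ C, u h < -r := by
  let ball : Set (WeakDual ℝ X) := WeakDual.toStrongDual ⁻¹' Metric.closedBall 0 r
  have hdisj : Disjoint (StrongDual.toWeakDual '' C) ball := by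
    rw [disjoint_left]
    rintro _ ⟨u, hu, rfl⟩ hball
    exact (hrC u hu).not_ge (mem_closedBall_zero_iff.mp hball)
  obtain ⟨φ, a, b, hCa, hab, hbBall⟩ := geometric_hahn_banach_compact_closed
    (hconv.linear_image StrongDual.toWeakDual.toLinearMap) hC
    ((convex_closedBall 0 r).linear_preimage WeakDual.toStrongDual.toLinearMap)
    (WeakDual.isClosed_closedBall 0 r) hdisj
  obtain ⟨h₀, hφ⟩ := WeakDual.exists_eq_eval φ
  have hCa' : ∀ u ∈ C, u h₀ < a := fun u hu => hφ _ ▸ hCa _ ⟨u, hu, rfl⟩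
  have hbBall' : ∀ g : StrongDual ℝ X, ‖g‖ ≤ r → b < g h₀ := fun g hg =>
    hφ _ ▸ hbBall (StrongDual.toWeakDual g) (mem_closedBall_zero_iff.mpr hg)
  have h₀_ne : ‖h₀‖ ≠ 0 := by
    rintro h₀_eq
    obtain ⟨u, hu⟩ := hne
    have := hbBall' 0 (by simpa using hr)
    simp only [norm_eq_zero.mp h₀_eq, map_zero] at hCa' this
    linarith [hCa' u hu]
  obtain ⟨g, hg_norm, hg_h₀⟩ := exists_dual_vector ℝ h₀ h₀_ne
  have hb : b < -(r * ‖h₀‖) := by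
    simpa [hg_h₀] using hbBall' (-(r • g)) (by simp [norm_smul, hg_norm, abs_of_nonneg hr])
  have h₀_pos : 0 < ‖h₀‖ := (norm_nonneg _).lt_of_ne' h₀_ne
  refine ⟨‖h₀‖⁻¹ • h₀, norm_smul_inv_norm (norm_ne_zero_iff.mp h₀_ne), fun u hu => ?_⟩
  rw [map_smul, smul_eq_mul, inv_mul_lt_iff₀ h₀_pos]
  linarith [hCa' u hu]

theorem exists_norm_eq_one_sSup_add_sInf_lt {A B : Set (StrongDual ℝ X)} (hA : A.Nonempty)
    (hA_conv : Convex ℝ A) (hA_cpt : WeakStarCompact A) (hB_cpt : WeakStarCompact B) {c : ℝ}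
    (hc : 0 ≤ c) {w : StrongDual ℝ X} (hw : w ∈ B)
    (hlt : c < sInf ((fun v => ‖v + w‖) '' A)) :
    ∃ h : X, ‖h‖ = 1 ∧ sSup ((fun v => v h) '' A) + sInf ((fun w => w h) '' B) < -c := by
  obtain ⟨r, hcr, hr⟩ := exists_between hlt
  have hr_norm : ∀ u ∈ (· + w) '' A, r < ‖u‖ := by
    rintro _ ⟨v, hv, rfl⟩
    exact hr.trans_le (csInf_le ⟨0, by rintro _ ⟨_, _, rfl⟩; positivity⟩ ⟨v, hv, rfl⟩)
  obtain ⟨h, hh, hlt_r⟩ := exists_norm_eq_one_forall_apply_lt_neg (hA.image _)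
    (by simpa only [add_comm _ w] using hA_conv.translate w) (hA_cpt.image_add_right_s2 w)
    (hc.trans hcr.le) hr_norm
  refine ⟨h, hh, ?_⟩
  have hsup : sSup ((fun v => v h) '' A) ≤ -r - w h :=
    csSup_le (hA.image _) <| by
      rintro _ ⟨v, hv, rfl⟩
      have hv_lt : v h + w h < -r := hlt_r _ ⟨v, hv, rfl⟩
      exact le_sub_iff_add_le.mpr hv_lt.le
  have hinf : sInf ((fun w => w h) '' B) ≤ w h :=
    csInf_le (hB_cpt.isCompact_image_eval h).bddBelow ⟨w, hw, rfl⟩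
  linarith

theorem exists_lt_sInf_norm_add {A B : Set (StrongDual ℝ X)} (hA : A.Nonempty)
    (hB : B.Nonempty) (hA_cpt : WeakStarCompact A) (hB_cpt : WeakStarCompact B) {h : X}
    (hh : ‖h‖ ≤ 1) {c : ℝ} (hlt : sSup ((fun v => v h) '' A) + sInf ((fun w => w h) '' B) < -c) :
    ∃ w ∈ B, c < sInf ((fun v => ‖v + w‖) '' A) := by
  obtain ⟨w, hw, hw_min⟩ := (hB_cpt.isCompact_image_eval h).sInf_mem (hB.image _)
  refine ⟨w, hw, (lt_neg.mp hlt).trans_le (le_csInf (hA.image _) ?_)⟩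
  rintro _ ⟨v, hv, rfl⟩
  have hv_le : v h ≤ sSup ((fun v => v h) '' A) :=
    le_csSup (hA_cpt.isCompact_image_eval h).bddAbove ⟨v, hv, rfl⟩
  calc -(sSup ((fun v => v h) '' A) + sInf ((fun w => w h) '' B))
      ≤ -((v + w) h) := by rw [← hw_min]; simp only [add_apply]; linarith
    _ ≤ ‖(v + w) h‖ := neg_le_abs _
    _ ≤ ‖v + w‖ := (v + w).le_of_opNorm_le_of_le le_rfl hh |>.trans_eq (mul_one _)

namespace IsQuasidiff

variable {f : X → ℝ} {x : X} {f' f'' : X → ℝ} {A B A' B' : Set (StrongDual ℝ X)}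

theorem deriv_eq (hq : IsQuasidiff f x f' A B) (hq' : IsQuasidiff f x f'' A' B') :
    f' = f'' := by
  obtain ⟨-, -, -, -, -, -, hf', -⟩ := hq
  obtain ⟨-, -, -, -, -, -, hf'', -⟩ := hq'
  exact funext fun h => tendsto_nhds_unique (hf' h) (hf'' h)

theorem exists_lt_sInf_norm_add_iff (hq : IsQuasidiff f x f' A B) {c : ℝ} (hc : 0 ≤ c) :
    (∃ w ∈ B, c < sInf ((fun v => ‖v + w‖) '' A)) ↔ ∃ h : X, ‖h‖ = 1 ∧ f' h < -c := by
  obtain ⟨hA, hB, hA_conv, -, hA_cpt, hB_cpt, -, hf'⟩ := hq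
  simp only [hf']
  constructor
  · rintro ⟨w, hw, hlt⟩
    exact exists_norm_eq_one_sSup_add_sInf_lt hA hA_conv hA_cpt hB_cpt hc hw hlt
  · rintro ⟨h, hh, hlt⟩
    exact exists_lt_sInf_norm_add hA hB hA_cpt hB_cpt hh.le hlt

end IsQuasidiff

end

theorem quasidiff_slope_condition_iff_general
    {X : Type*} [NormedAddCommGroup X] [NormedSpace ℝ X]
    (f : X → ℝ) (x : X) (K : ℝ) (hK : 0 < K)
    (f' : X → ℝ) (A B : Set (X →L[ℝ] ℝ)) (hq : IsQuasidiff f x f' A B)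
    (f'' : X → ℝ) (A' B' : Set (X →L[ℝ] ℝ)) (hq' : IsQuasidiff f x f'' A' B') :
    ((∃ w ∈ B, 1 / K < sInf ((fun v => ‖v + w‖) '' A)) ↔
      (∃ h : X, ‖h‖ = 1 ∧ f' h < -(1 / K))) ∧
    ((∃ w ∈ B, 1 / K < sInf ((fun v => ‖v + w‖) '' A)) ↔
      (∃ w ∈ B', 1 / K < sInf ((fun v => ‖v + w‖) '' A'))) := by
  have hc : 0 ≤ 1 / K := by positivity
  obtain rfl := hq.deriv_eq hq'
  have hiff := hq.exists_lt_sInf_norm_add_iff hc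
  exact ⟨hiff, hiff.trans (hq'.exists_lt_sInf_norm_add_iff hc).symm⟩

/-- the condition `∃ w ∈ B, inf{‖v + w‖ : v ∈ A} > 1/K` is equivalent to the
existence of a unit vector `h` with `f'(x,h) < -1/K`; consequently it is independent of the
choice of the quasidifferential of `f` at `x`. -/
theorem quasidiff_slope_condition_iff
    {X : Type*} [NormedAddCommGroup X] [NormedSpace ℝ X] [CompleteSpace X]
    (f : X → ℝ) (x : X) (K : ℝ) (hK : 0 < K)
    (f' : X → ℝ) (A B : Set (X →L[ℝ] ℝ)) (hq : IsQuasidiff f x f' A B)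
    (f'' : X → ℝ) (A' B' : Set (X →L[ℝ] ℝ)) (hq' : IsQuasidiff f x f'' A' B') :
    ((∃ w ∈ B, 1 / K < sInf ((fun v => ‖v + w‖) '' A)) ↔
      (∃ h : X, ‖h‖ = 1 ∧ f' h < -(1 / K))) ∧
    ((∃ w ∈ B, 1 / K < sInf ((fun v => ‖v + w‖) '' A)) ↔
      (∃ w ∈ B', 1 / K < sInf ((fun v => ‖v + w‖) '' A'))) :=
  quasidiff_slope_condition_iff_general f x K hK f' A B hq f'' A' B' hq'
end

section
/- Let X be a real Banach space, S₁,…,S_l and T_i (i ∈ I₀, a nonempty finite index set) be nonempty convex weak*-compact subsets of X*. Then there exists h̄ ∈ X with ⟨v, h̄⟩ = 0 for all v ∈ S_j and all j = 1,…,l and ⟨v, h̄⟩ < 0 for all v ∈ T_i and all i ∈ I₀, if and only if conv(⋃_{i∈I₀} T_i) ∩ cl_{w*}(span(⋃_{j=1}^{l} S_j)) = ∅, where cl_{w*} denotes closure in the weak* topology of X* and conv the convex hull. -/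
open Filter Topology Set Pointwise

/-!
If `h̄` exists, `w ↦ w h̄` is a weak*-continuous functional vanishing on the weak*-closed span of
the `Sⱼ` and negative on the convex hull of the `Tᵢ`, so the two sets are disjoint. Conversely,
the convex hull of finitely many compact convex sets is compact (iterated convex joins), so
Hahn–Banach in the locally convex space `(X*, w*)` strictly separates it from the weak*-closed
subspace. The separating functional is bounded on a subspace, hence vanishes there, and every
weak*-continuous functional on `X*` is evaluation at a point of `X`: that point is `h̄`.
-/

section ConvexHullCompact

variable {𝕜 E : Type*} [Field 𝕜] [LinearOrder 𝕜] [IsStrictOrderedRing 𝕜] [AddCommGroup E]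
  [Module 𝕜 E]

theorem convexJoin_eq_image (s t : Set E) :
    convexJoin 𝕜 s t =
      (fun p : 𝕜 × E × E => (1 - p.1) • p.2.1 + p.1 • p.2.2) '' (Icc 0 1 ×ˢ s ×ˢ t) := by
  ext z
  simp only [mem_convexJoin, segment_eq_image, mem_image, mem_prod, Prod.exists]
  constructor
  · rintro ⟨x, hx, y, hy, θ, hθ, rfl⟩
    exact ⟨θ, x, y, ⟨hθ, hx, hy⟩, rfl⟩
  · rintro ⟨θ, x, y, ⟨hθ, hx, hy⟩, rfl⟩
    exact ⟨x, hx, y, hy, θ, hθ, rfl⟩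

variable [TopologicalSpace 𝕜] [CompactIccSpace 𝕜] [ContinuousSub 𝕜]
  [TopologicalSpace E] [IsTopologicalAddGroup E] [ContinuousSMul 𝕜 E]

theorem IsCompact.convexJoin {s t : Set E} (hs : IsCompact s) (ht : IsCompact t) :
    IsCompact (convexJoin 𝕜 s t) := by
  rw [convexJoin_eq_image]
  exact (isCompact_Icc.prod (hs.prod ht)).image (by fun_prop)

theorem IsCompact.convexHull_union {s t : Set E} (hs : IsCompact (convexHull 𝕜 s))
    (ht : IsCompact (convexHull 𝕜 t)) : IsCompact (convexHull 𝕜 (s ∪ t)) := by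
  rcases s.eq_empty_or_nonempty with rfl | hs₀
  · simpa using ht
  rcases t.eq_empty_or_nonempty with rfl | ht₀
  · simpa using hs
  rw [_root_.convexHull_union hs₀ ht₀]
  exact hs.convexJoin ht

theorem Finset.isCompact_convexHull_biUnion {ι : Type*} (s : Finset ι) {K : ι → Set E}
    (hK : ∀ i ∈ s, IsCompact (convexHull 𝕜 (K i))) :
    IsCompact (convexHull 𝕜 (⋃ i ∈ s, K i)) := by
  classical
  induction s using Finset.induction_on with
  | empty => simp
  | insert a s _ ih =>
    rw [Finset.set_biUnion_insert]
    exact (hK a (mem_insert_self a s)).convexHull_union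
      (ih fun i hi => hK i (mem_insert_of_mem hi))

theorem isCompact_convexHull_iUnion {ι : Type*} [Finite ι] {K : ι → Set E}
    (hK : ∀ i, IsCompact (convexHull 𝕜 (K i))) : IsCompact (convexHull 𝕜 (⋃ i, K i)) := by
  cases nonempty_fintype ι
  simpa using Finset.univ.isCompact_convexHull_biUnion (𝕜 := 𝕜) fun i _ => hK i

end ConvexHullCompact

theorem LinearMap.apply_eq_zero_of_forall_mem_lt {𝕜 M : Type*} [Field 𝕜] [LinearOrder 𝕜]
    [IsStrictOrderedRing 𝕜] [AddCommGroup M] [Module 𝕜 M] (f : M →ₗ[𝕜] 𝕜)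
    {p : Submodule 𝕜 M} {c : 𝕜} (hf : ∀ x ∈ p, c < f x) {x : M} (hx : x ∈ p) : f x = 0 := by
  by_contra hfx
  have := hf (((c - 1) / f x) • x) (p.smul_mem _ hx)
  rw [map_smul, smul_eq_mul, div_mul_cancel₀ _ hfx] at this
  linarith

theorem Submodule.exists_strongDual_separating_iff_disjoint {E : Type*} [AddCommGroup E]
    [Module ℝ E] [TopologicalSpace E] [IsTopologicalAddGroup E] [ContinuousSMul ℝ E]
    [LocallyConvexSpace ℝ E] {p : Submodule ℝ E} (hp : IsClosed (p : Set E)) {C : Set E}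
    (hCconv : Convex ℝ C) (hCcomp : IsCompact C) :
    (∃ f : StrongDual ℝ E, (∀ x ∈ p, f x = 0) ∧ ∀ y ∈ C, f y < 0) ↔ Disjoint C p := by
  refine ⟨fun ⟨f, hfp, hfC⟩ => disjoint_left.2 fun y hyC hyp => (hfC y hyC).ne (hfp y hyp),
    fun hCp => ?_⟩
  obtain ⟨f, u, v, hfC, huv, hfp⟩ :=
    geometric_hahn_banach_compact_closed hCconv hCcomp p.convex hp hCp
  have hv : v < 0 := by simpa using hfp 0 p.zero_mem
  exact ⟨f, fun x hx => f.toLinearMap.apply_eq_zero_of_forall_mem_lt hfp hx,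
    fun y hy => by linarith [hfC y hy]⟩

theorem ContinuousLinearMap.forall_mem_topologicalClosure_span_eq_zero_iff {R E F : Type*}
    [Semiring R] [AddCommMonoid E] [Module R E] [TopologicalSpace E] [ContinuousAdd E]
    [ContinuousConstSMul R E] [AddCommMonoid F] [Module R F] [TopologicalSpace F] [T1Space F]
    (φ : E →L[R] F) {s : Set E} :
    (∀ x ∈ (Submodule.span R s).topologicalClosure, φ x = 0) ↔ ∀ x ∈ s, φ x = 0 :=
  ⟨fun h x hx => h x ((Submodule.span R s).le_topologicalClosure (Submodule.subset_span hx)),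
    fun h _ hx => (Submodule.span R s).topologicalClosure_minimal
      (Submodule.span_le.2 fun _ hx => h _ hx) φ.isClosed_ker hx⟩

theorem LinearMap.forall_mem_convexHull_lt_iff {𝕜 E : Type*} [Field 𝕜] [LinearOrder 𝕜]
    [IsStrictOrderedRing 𝕜] [AddCommGroup E] [Module 𝕜 E] (f : E →ₗ[𝕜] 𝕜) {s : Set E} {c : 𝕜} :
    (∀ x ∈ convexHull 𝕜 s, f x < c) ↔ ∀ x ∈ s, f x < c :=
  (convex_halfSpace_lt f.isLinear c).convexHull_subset_iff

theorem direction_iff_weakStar_separation_general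
    {X : Type*} [NormedAddCommGroup X] [NormedSpace ℝ X]
    (l : ℕ) {ι : Type*} [Fintype ι]
    (S : Fin l → Set (X →L[ℝ] ℝ)) (T : ι → Set (X →L[ℝ] ℝ))
    (hTconv : ∀ i, Convex ℝ (T i))
    (hTcomp : ∀ i, WeakStarCompact (T i)) :
    (∃ hb : X,
      (∀ j : Fin l, ∀ v ∈ S j, v hb = 0) ∧
      (∀ i : ι, ∀ v ∈ T i, v hb < 0)) ↔
    ((fun v : X →L[ℝ] ℝ => (StrongDual.toWeakDual v : WeakDual ℝ X)) ''
        convexHull ℝ (⋃ i : ι, T i)) ∩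
      closure ((fun v : X →L[ℝ] ℝ => (StrongDual.toWeakDual v : WeakDual ℝ X)) ''
        (Submodule.span ℝ (⋃ j : Fin l, S j) : Set (X →L[ℝ] ℝ))) = ∅ := by
  let D : StrongDual ℝ X →ₗ[ℝ] WeakDual ℝ X := StrongDual.toWeakDual.toLinearMap
  change _ ↔ D '' convexHull ℝ (⋃ i, T i) ∩ closure (D '' Submodule.span ℝ (⋃ j, S j)) = ∅
  rw [D.image_convexHull, ← Submodule.map_coe, ← Submodule.span_image,
    ← Submodule.topologicalClosure_coe, ← disjoint_iff_inter_eq_empty]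
  have hCcomp : IsCompact (convexHull ℝ (D '' ⋃ i, T i)) := by
    rw [image_iUnion]
    exact isCompact_convexHull_iUnion fun i =>
      ((hTconv i).linear_image D).convexHull_eq.symm ▸ hTcomp i
  set N := (Submodule.span ℝ (D '' ⋃ j, S j)).topologicalClosure
  set C := convexHull ℝ (D '' ⋃ i, T i)
  have : LocallyConvexSpace ℝ (WeakDual ℝ X) := WeakBilin.locallyConvexSpace
  rw [← Submodule.exists_strongDual_separating_iff_disjoint
    (Submodule.isClosed_topologicalClosure _) (convex_convexHull ℝ _) hCcomp]
  have hS (h : X) : (∀ j, ∀ v ∈ S j, v h = 0) ↔ ∀ w ∈ N, w h = 0 := by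
    have hN : (∀ w ∈ N, w h = 0) ↔ ∀ w ∈ D '' ⋃ j, S j, w h = 0 :=
      (WeakBilin.eval (topDualPairing ℝ X) h).forall_mem_topologicalClosure_span_eq_zero_iff
    simp only [hN, forall_mem_image, mem_iUnion, forall_exists_index]
    exact forall_comm
  have hT (h : X) : (∀ i, ∀ v ∈ T i, v h < 0) ↔ ∀ w ∈ C, w h < 0 := by
    have hC : (∀ w ∈ C, w h < 0) ↔ ∀ w ∈ D '' ⋃ i, T i, w h < 0 :=
      (WeakBilin.eval (topDualPairing ℝ X) h).toLinearMap.forall_mem_convexHull_lt_iff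
        (s := D '' ⋃ i, T i) (c := 0)
    simp only [hC, forall_mem_image, mem_iUnion, forall_exists_index]
    exact forall_comm
  constructor
  · rintro ⟨h, hSh, hTh⟩
    exact ⟨WeakBilin.eval _ h, (hS h).1 hSh, (hT h).1 hTh⟩
  · rintro ⟨f, hfN, hfC⟩
    obtain ⟨h, rfl⟩ := LinearMap.dualEmbedding_surjective _ f
    exact ⟨h, (hS h).2 hfN, (hT h).2 hfC⟩

/-- for nonempty convex weak*-compact sets `S₁,…,S_l` and `T_i` (`i ∈ I₀`) in
`X*`, a direction `h̄` annihilating all the `Sⱼ` and strictly separating the `T_i` from zero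
exists iff the convex hull of `⋃ T_i` does not meet the weak*-closure of the span of `⋃ Sⱼ`. -/
theorem direction_iff_weakStar_separation
    {X : Type*} [NormedAddCommGroup X] [NormedSpace ℝ X] [CompleteSpace X]
    (l : ℕ) {ι : Type*} [Fintype ι] [Nonempty ι]
    (S : Fin l → Set (X →L[ℝ] ℝ)) (T : ι → Set (X →L[ℝ] ℝ))
    (hSne : ∀ j, (S j).Nonempty) (hSconv : ∀ j, Convex ℝ (S j))
    (hScomp : ∀ j, WeakStarCompact (S j))
    (hTne : ∀ i, (T i).Nonempty) (hTconv : ∀ i, Convex ℝ (T i))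
    (hTcomp : ∀ i, WeakStarCompact (T i)) :
    (∃ hb : X,
      (∀ j : Fin l, ∀ v ∈ S j, v hb = 0) ∧
      (∀ i : ι, ∀ v ∈ T i, v hb < 0)) ↔
    ((fun v : X →L[ℝ] ℝ => (StrongDual.toWeakDual v : WeakDual ℝ X)) ''
        convexHull ℝ (⋃ i : ι, T i)) ∩
      closure ((fun v : X →L[ℝ] ℝ => (StrongDual.toWeakDual v : WeakDual ℝ X)) ''
        (Submodule.span ℝ (⋃ j : Fin l, S j) : Set (X →L[ℝ] ℝ))) = ∅ :=
  direction_iff_weakStar_separation_general l S T hTconv hTcomp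
end

section
/- Let X = ℝⁿ, Y = ℝˡ with l ≤ n, P a metric space, and f_j : ℝⁿ × P → ℝ (j = 1,…,l) continuous functions such that, for all (x,p) in a neighborhood of (x̄,p̄), each f_j(·,p) is quasidifferentiable at x with quasidifferential [∂̲ₓf_j(x,p), ∂̄ₓf_j(x,p)], and the set-valued maps (x,p) ↦ ∂̲ₓf_j(x,p) and (x,p) ↦ ∂̄ₓf_j(x,p) are outer semicontinuous at (x̄,p̄). Set F = (f₁,…,f_l) : ℝⁿ × P → ℝˡ and suppose that every l×n matrix whose j-th row equals v_j + w_j for some v_j ∈ ∂̲ₓf_j(x̄,p̄) and w_j ∈ ∂̄ₓf_j(x̄,p̄) has full rank l. Then there exist K > 0 and δ > 0 such that for every p with d(p,p̄) < δ the single-valued mapping x ↦ F(x,p) is metrically regular near (x̄, F(x̄,p)) with norm of metric regularity not exceeding K. -/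
open Filter Topology Set Pointwise RealInnerProductSpace

/-- Dini directional differentiability of `f` at `x` with directional derivative `f'`. -/
def HasDiniDerivE {n : ℕ} (f : EuclideanSpace ℝ (Fin n) → ℝ) (x : EuclideanSpace ℝ (Fin n))
    (f' : EuclideanSpace ℝ (Fin n) → ℝ) : Prop :=
  ∀ h, Tendsto (fun t : ℝ => (f (x + t • h) - f x) / t) (𝓝[>] (0 : ℝ)) (𝓝 (f' h))

/-- `[A, B]` is a quasidifferential of `f : ℝⁿ → ℝ` at `x` (with the Euclidean pairing),
with Dini directional derivative `f'`. -/
def IsQuasidiffE {n : ℕ} (f : EuclideanSpace ℝ (Fin n) → ℝ) (x : EuclideanSpace ℝ (Fin n))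
    (f' : EuclideanSpace ℝ (Fin n) → ℝ) (A B : Set (EuclideanSpace ℝ (Fin n))) : Prop :=
  A.Nonempty ∧ B.Nonempty ∧ Convex ℝ A ∧ Convex ℝ B ∧ IsCompact A ∧ IsCompact B ∧
    HasDiniDerivE f x f' ∧
    ∀ h, f' h = sSup ((fun v => ⟪v, h⟫) '' A) + sInf ((fun w => ⟪w, h⟫) '' B)

open Metric

/-!
By compactness and the rank condition there is `σ > 0` with `‖∑ ηⱼ (vⱼ + wⱼ)‖ ≥ σ ‖η‖` for all
selections `vⱼ ∈ ∂̲fⱼ(x̄, p̄)`, `wⱼ ∈ ∂̄fⱼ(x̄, p̄)`, and by outer semicontinuity the same holds with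
`σ / 2` at every `(x, p)` near `(x̄, p̄)`. If `y ≠ F(x, p)`, let `η` be the unit vector along
`y - F(x, p)`. The combinations `∑ ηⱼ (vⱼ + wⱼ)` form a convex compact set missing the open ball of
radius `σ / 2`; its point of least norm gives a unit direction `h` with `∑ ηⱼ f'ⱼ(h) ≥ σ / 2`, so
`‖y - F(·, p)‖` decreases at rate `> σ / 4` along `h`. Hence a minimiser of
`ξ ↦ ‖y - F(ξ, p)‖ + (σ / 4) ‖ξ - x‖` over a compact ball around `x̄` (Ekeland's principle in finite
dimension) solves `F(ξ, p) = y`, and it lies within `(4 / σ) ‖y - F(x, p)‖` of `x`.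
-/

theorem exists_norm_eq_one_le_inner_of_le_norm {E : Type*} [NormedAddCommGroup E]
    [InnerProductSpace ℝ E] {Q : Set E} (hQ : Convex ℝ Q)
    (hQc : IsComplete Q) (hQne : Q.Nonempty) {σ : ℝ} (hσ : 0 < σ) (hle : ∀ q ∈ Q, σ ≤ ‖q‖) :
    ∃ h : E, ‖h‖ = 1 ∧ ∀ q ∈ Q, σ ≤ ⟪q, h⟫ := by
  obtain ⟨q₀, hq₀, hmin⟩ := exists_norm_eq_iInf_of_complete_convex hQne hQc hQ 0
  have hproj := (norm_eq_iInf_iff_real_inner_le_zero hQ hq₀).1 hmin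
  have hq₀pos : 0 < ‖q₀‖ := hσ.trans_le (hle q₀ hq₀)
  refine ⟨‖q₀‖⁻¹ • q₀, by simp [norm_smul, hq₀pos.ne'], fun q hq => ?_⟩
  have hsq : ‖q₀‖ ^ 2 ≤ ⟪q, q₀⟫ := by
    have := hproj q hq
    rw [zero_sub, inner_neg_left, inner_sub_right, real_inner_self_eq_norm_sq,
      real_inner_comm] at this
    linarith
  rw [real_inner_smul_right, le_inv_mul_iff₀ hq₀pos]
  nlinarith [hle q₀ hq₀]

theorem eventually_norm_lt_sub_of_hasDerivWithinAt {F : Type*} [NormedAddCommGroup F]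
    [InnerProductSpace ℝ F] {g : ℝ → F} {g' : F} (hg : HasDerivWithinAt g g' (Ioi 0) 0)
    (h0 : g 0 ≠ 0) {c : ℝ} (hc : ⟪g 0, g'⟫ < -c * ‖g 0‖) :
    ∀ᶠ t in 𝓝[>] 0, ‖g t‖ < ‖g 0‖ - c * t := by
  have hpos : 0 < ‖g 0‖ := norm_pos_iff.2 h0
  have hnorm : HasDerivWithinAt (fun t => ‖g t‖) (⟪g 0, g'⟫ / ‖g 0‖) (Ioi 0) 0 := by
    convert hg.norm_sq.sqrt (by positivity) using 1
    · simp only [Real.sqrt_sq (norm_nonneg _)]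
    · rw [Real.sqrt_sq (norm_nonneg _)]
      field_simp
  filter_upwards [hnorm.limsup_slope_le' (lt_irrefl (0 : ℝ)) (r := -c) (by rwa [div_lt_iff₀ hpos]),
    self_mem_nhdsWithin] with t ht (htpos : 0 < t)
  rw [slope_def_field, sub_zero, div_lt_iff₀ htpos] at ht
  linarith

section Ekeland

variable {X : Type*} [MetricSpace X] [ProperSpace X]

theorem exists_eq_zero_dist_le_of_forall_descent {φ : X → ℝ} (hφ : Continuous φ)
    (hφ0 : ∀ ξ, 0 ≤ φ ξ) {xb x : X} {ρ c : ℝ} (hc : 0 < c)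
    (hdesc : ∀ ξ ∈ closedBall xb (ρ / 2), φ ξ ≠ 0 →
      ∃ ζ ∈ closedBall xb ρ, φ ζ + c * dist ζ ξ < φ ξ)
    (hx : dist x xb + φ x / c ≤ ρ / 2) :
    ∃ ξ, φ ξ = 0 ∧ dist x ξ ≤ φ x / c := by
  have hxρ : x ∈ closedBall xb ρ := by
    rw [mem_closedBall]
    linarith [div_nonneg (hφ0 x) hc.le, dist_nonneg (x := x) (y := xb)]
  obtain ⟨ξ, hξρ, hmin⟩ := (isCompact_closedBall xb ρ).exists_isMinOn ⟨x, hxρ⟩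
    (f := fun ζ => φ ζ + c * dist ζ x)
    (hφ.add (continuous_const.mul (continuous_id.dist continuous_const))).continuousOn
  have hξx : φ ξ + c * dist ξ x ≤ φ x := by simpa using hmin hxρ
  have hdist : dist x ξ ≤ φ x / c := by
    rw [dist_comm, le_div_iff₀' hc]
    linarith [hφ0 ξ]
  refine ⟨ξ, by_contra fun hne => ?_, hdist⟩
  obtain ⟨ζ, hζρ, hζ⟩ := hdesc ξ (by
    rw [mem_closedBall]; linarith [dist_triangle ξ x xb, dist_comm x ξ]) hne
  have hζx : φ ξ + c * dist ξ x ≤ φ ζ + c * dist ζ x := hmin hζρ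
  nlinarith [dist_triangle ζ ξ x]

theorem exists_metricRegularity_of_eventually_descent {P Y : Type*} [MetricSpace P]
    [MetricSpace Y] {F : X → P → Y}
    (hF : Continuous (Function.uncurry F)) {xb : X} {pb : P} {c : ℝ} (hc : 0 < c)
    (hdesc : ∀ᶠ q in 𝓝 (xb, pb), ∀ y, F q.1 q.2 ≠ y → ∀ ε > 0,
      ∃ ζ, dist ζ q.1 < ε ∧ dist y (F ζ q.2) + c * dist ζ q.1 < dist y (F q.1 q.2)) :
    ∃ δ > 0, ∀ p, dist p pb < δ → ∃ r > 0, ∀ x, dist x xb ≤ r → ∀ y, dist y (F xb p) ≤ r →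
      Metric.infEDist x {ξ | F ξ p = y} ≤ ENNReal.ofReal (dist y (F x p) / c) := by
  obtain ⟨ρ, hρ, hgood⟩ := Metric.eventually_nhds_iff.1 hdesc
  obtain ⟨δ, hδ, hnear⟩ := Metric.continuous_iff.1 hF (xb, pb) (c * ρ / 8) (by positivity)
  refine ⟨min ρ δ, lt_min hρ hδ, fun p hp => ?_⟩
  have hpair {ξ : X} {ε : ℝ} (hξ : dist ξ xb < ε) (hpε : min ρ δ ≤ ε) :
      dist (ξ, p) (xb, pb) < ε := by
    rw [Prod.dist_eq]; exact max_lt hξ (hp.trans_le hpε)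
  set r := min (δ / 2) (c * ρ / (4 * (c + 1)))
  refine ⟨r, by positivity, fun x hx y hy => ?_⟩
  have hr : r * (c + 1) ≤ c * ρ / 4 := by
    rw [← le_div_iff₀ (by positivity)]
    exact (min_le_right _ _).trans_eq (by field_simp)
  have hxδ : dist x xb < δ := hx.trans_lt ((min_le_left _ _).trans_lt (half_lt_self hδ))
  have hFx : dist (F xb p) (F x p) < c * ρ / 4 := by
    have h₁ := hnear _ (hpair (ξ := xb) (by simpa using hδ) (min_le_right _ _))
    have h₂ := hnear _ (hpair hxδ (min_le_right _ _))
    simp only [Function.uncurry_apply_pair] at h₁ h₂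
    linarith [dist_triangle_right (F xb p) (F x p) (F xb pb)]
  have hdescent : ∀ ξ ∈ closedBall xb (ρ / 2), dist y (F ξ p) ≠ 0 →
      ∃ ζ ∈ closedBall xb ρ, dist y (F ζ p) + c * dist ζ ξ < dist y (F ξ p) := by
    intro ξ hξ hne
    rw [mem_closedBall] at hξ
    obtain ⟨ζ, hζξ, hζ⟩ := hgood (hpair (by linarith) (min_le_left _ _)) y
      (fun h => hne (h ▸ dist_self _)) (ρ / 2) (half_pos hρ)
    refine ⟨ζ, ?_, hζ⟩
    rw [mem_closedBall]
    linarith [dist_triangle ζ ξ xb]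
  have hstart : dist x xb + dist y (F x p) / c ≤ ρ / 2 := by
    rw [← le_sub_iff_add_le', div_le_iff₀ hc]
    nlinarith [dist_triangle y (F xb p) (F x p)]
  obtain ⟨ξ, hξ, hdist⟩ := exists_eq_zero_dist_le_of_forall_descent
    (continuous_const.dist (hF.comp (continuous_id.prodMk continuous_const)))
    (fun _ => dist_nonneg) hc hdescent hstart
  calc Metric.infEDist x {ξ | F ξ p = y}
      ≤ edist x ξ := Metric.infEDist_le_edist_of_mem (dist_eq_zero.1 hξ).symm
    _ ≤ ENNReal.ofReal (dist y (F x p) / c) := by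
      rw [edist_dist]; exact ENNReal.ofReal_le_ofReal hdist

end Ekeland

section Selections

variable {ι E : Type*} [Fintype ι] [NormedAddCommGroup E] [NormedSpace ℝ E]

theorem exists_pos_mul_norm_le_norm_sum_smul {S : ι → Set E} (hS : ∀ j, IsCompact (S j))
    (hli : ∀ s : ι → E, (∀ j, s j ∈ S j) → LinearIndependent ℝ s) :
    ∃ σ > 0, ∀ (η : EuclideanSpace ℝ ι) (s : ι → E), (∀ j, s j ∈ S j) →
      σ * ‖η‖ ≤ ‖∑ j, η j • s j‖ := by
  have hpos : ∀ z ∈ sphere (0 : EuclideanSpace ℝ ι) 1 ×ˢ univ.pi S,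
      0 < ‖∑ j, z.1 j • z.2 j‖ := by
    rintro ⟨η, s⟩ ⟨hη, hs⟩
    refine norm_pos_iff.2 fun hzero => ?_
    have hη0 : η = 0 := by
      ext j
      exact Fintype.linearIndependent_iff.1 (hli s fun j => hs j (mem_univ j)) η hzero j
    simp [hη0] at hη
  obtain ⟨σ, hσ, hle⟩ := ((isCompact_sphere _ _).prod (isCompact_univ_pi hS)).exists_forall_le'
    (by fun_prop) hpos
  refine ⟨σ, hσ, fun η s hs => ?_⟩
  rcases eq_or_ne η 0 with rfl | hη
  · simp
  have hηpos : 0 < ‖η‖ := norm_pos_iff.2 hη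
  have hunit := hle (‖η‖⁻¹ • η, s) ⟨by simp [norm_smul, hηpos.ne'], fun j _ => hs j⟩
  simp only [PiLp.smul_apply, smul_eq_mul, mul_smul, ← Finset.smul_sum, norm_smul, norm_inv,
    norm_norm] at hunit
  rwa [le_inv_mul_iff₀ hηpos, mul_comm] at hunit

theorem mul_norm_le_norm_sum_smul_of_mem_thickening {S : ι → Set E} {σ ε : ℝ}
    (hS : ∀ (η : EuclideanSpace ℝ ι) (s : ι → E), (∀ j, s j ∈ S j) →
      σ * ‖η‖ ≤ ‖∑ j, η j • s j‖)
    (η : EuclideanSpace ℝ ι) {t : ι → E} (ht : ∀ j, t j ∈ thickening ε (S j)) :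
    (σ - Fintype.card ι * ε) * ‖η‖ ≤ ‖∑ j, η j • t j‖ := by
  choose s hs hts using fun j => mem_thickening_iff.1 (ht j)
  have herr : ‖∑ j, η j • (t j - s j)‖ ≤ Fintype.card ι * ε * ‖η‖ :=
    calc ‖∑ j, η j • (t j - s j)‖ ≤ ∑ j, ‖η j • (t j - s j)‖ := norm_sum_le _ _
      _ ≤ ∑ _j : ι, ‖η‖ * ε := by
        gcongr with j
        rw [norm_smul, ← dist_eq_norm]
        exact mul_le_mul (PiLp.norm_apply_le η j) (hts j).le dist_nonneg (norm_nonneg _)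
      _ = Fintype.card ι * ε * ‖η‖ := by
        rw [Finset.sum_const, Finset.card_univ, nsmul_eq_mul]
        ring
  have hsplit : ∑ j, η j • t j = ∑ j, η j • s j + ∑ j, η j • (t j - s j) := by
    simp only [smul_sub, Finset.sum_sub_distrib, add_sub_cancel]
  have htri := norm_sub_le (∑ j, η j • t j) (∑ j, η j • (t j - s j))
  rw [hsplit, add_sub_cancel_right] at htri
  rw [hsplit]
  linarith [hS η s hs]

end Selections

theorem add_mem_thickening_add {E : Type*} [SeminormedAddCommGroup E] {s t : Set E} {a b : E}
    {ε δ : ℝ} (ha : a ∈ thickening ε s) (hb : b ∈ thickening δ t) :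
    a + b ∈ thickening (ε + δ) (s + t) := by
  obtain ⟨a', ha', haa'⟩ := mem_thickening_iff.1 ha
  obtain ⟨b', hb', hbb'⟩ := mem_thickening_iff.1 hb
  exact mem_thickening_iff.2 ⟨a' + b', add_mem_add ha' hb',
    (dist_add_add_le a b a' b').trans_lt (add_lt_add haa' hbb')⟩

theorem eventually_subset_thickening_of_forall_isOpen {Z E : Type*} [PseudoMetricSpace Z]
    [PseudoMetricSpace E] {G : Z → Set E} {z₀ : Z}
    (hG : ∀ V : Set E, IsOpen V → G z₀ ⊆ V → ∃ δ > 0, ∀ z, dist z z₀ < δ → G z ⊆ V)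
    {ε : ℝ} (hε : 0 < ε) : ∀ᶠ z in 𝓝 z₀, G z ⊆ thickening ε (G z₀) :=
  Metric.eventually_nhds_iff.2 (hG _ isOpen_thickening (self_subset_thickening hε _))

section Quasidifferential

variable {n : ℕ}

theorem IsQuasidiffE.exists_mem_add_eq_inner {f f' : EuclideanSpace ℝ (Fin n) → ℝ}
    {x : EuclideanSpace ℝ (Fin n)} {A B : Set (EuclideanSpace ℝ (Fin n))}
    (hq : IsQuasidiffE f x f' A B) (h : EuclideanSpace ℝ (Fin n)) :
    ∃ s ∈ A + B, f' h = ⟪s, h⟫ := by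
  obtain ⟨hA, hB, -, -, hAc, hBc, -, hf'⟩ := hq
  have hcont : Continuous fun v : EuclideanSpace ℝ (Fin n) => ⟪v, h⟫ := by fun_prop
  obtain ⟨v, hv, hvh⟩ := (hAc.image hcont).sSup_mem (hA.image _)
  obtain ⟨w, hw, hwh⟩ := (hBc.image hcont).sInf_mem (hB.image _)
  exact ⟨v + w, add_mem_add hv hw, by rw [hf', ← hvh, ← hwh, inner_add_left]⟩

theorem hasDerivWithinAt_Ioi_of_hasDiniDerivE {ι : Type*} [Fintype ι]
    {f f' : ι → EuclideanSpace ℝ (Fin n) → ℝ} {x : EuclideanSpace ℝ (Fin n)}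
    (hf : ∀ j, HasDiniDerivE (f j) x (f' j)) (h : EuclideanSpace ℝ (Fin n)) :
    HasDerivWithinAt (fun t : ℝ => (WithLp.toLp 2 fun j => f j (x + t • h) : EuclideanSpace ℝ ι))
      (WithLp.toLp 2 fun j => f' j h) (Ioi 0) 0 := by
  rw [hasDerivWithinAt_iff_tendsto_slope' (s := Ioi 0) (lt_irrefl 0)]
  have hpi : Tendsto (fun t : ℝ => fun j => (f j (x + t • h) - f j x) / t) (𝓝[>] 0)
      (𝓝 fun j => f' j h) := tendsto_pi_nhds.2 fun j => hf j h
  convert ((PiLp.continuous_toLp 2 _).tendsto _).comp hpi using 1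
  funext t
  ext j
  simp [slope_def_module, div_eq_inv_mul]

theorem exists_norm_eq_one_le_inner_of_isQuasidiffE {ι : Type*} [Fintype ι]
    {f df : ι → EuclideanSpace ℝ (Fin n) → ℝ} {A B : ι → Set (EuclideanSpace ℝ (Fin n))}
    {x : EuclideanSpace ℝ (Fin n)} (hq : ∀ j, IsQuasidiffE (f j) x (df j) (A j) (B j))
    {σ : ℝ} (hσ : 0 < σ)
    (hS : ∀ (η : EuclideanSpace ℝ ι) (s : ι → EuclideanSpace ℝ (Fin n)),
      (∀ j, s j ∈ A j + B j) → σ * ‖η‖ ≤ ‖∑ j, η j • s j‖)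
    {η : EuclideanSpace ℝ ι} (hη : ‖η‖ = 1) :
    ∃ h : EuclideanSpace ℝ (Fin n), ‖h‖ = 1 ∧ σ ≤ ⟪η, WithLp.toLp 2 fun j => df j h⟫ := by
  let L : (ι → EuclideanSpace ℝ (Fin n)) →ₗ[ℝ] EuclideanSpace ℝ (Fin n) :=
    ∑ j, η j • LinearMap.proj j
  have hL (s : ι → EuclideanSpace ℝ (Fin n)) : L s = ∑ j, η j • s j := by simp [L]
  have hcompact : IsCompact (univ.pi fun j => A j + B j) :=
    isCompact_univ_pi fun j => (hq j).2.2.2.2.1.add (hq j).2.2.2.2.2.1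
  obtain ⟨h, hh, hsep⟩ := exists_norm_eq_one_le_inner_of_le_norm
    ((convex_pi fun j _ => (hq j).2.2.1.add (hq j).2.2.2.1).linear_image L)
    (hcompact.image L.continuous_of_finiteDimensional).isComplete
    ((univ_pi_nonempty_iff.2 fun j => (hq j).1.add (hq j).2.1).image L) hσ
    (by rintro _ ⟨s, hs, rfl⟩; simpa [hL, hη] using hS η s fun j => hs j (mem_univ j))
  choose s hs hdf using fun j => (hq j).exists_mem_add_eq_inner h
  refine ⟨h, hh, ?_⟩
  calc σ ≤ ⟪L s, h⟫ := hsep (L s) (mem_image_of_mem L fun j _ => hs j)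
    _ = _ := by
      simp_rw [hL, sum_inner, real_inner_smul_left, ← hdf]
      simp [PiLp.inner_apply, mul_comm]

theorem exists_descent_direction_of_isQuasidiffE {ι : Type*} [Fintype ι]
    {f df : ι → EuclideanSpace ℝ (Fin n) → ℝ} {A B : ι → Set (EuclideanSpace ℝ (Fin n))}
    {x : EuclideanSpace ℝ (Fin n)} (hq : ∀ j, IsQuasidiffE (f j) x (df j) (A j) (B j))
    {σ : ℝ} (hσ : 0 < σ)
    (hS : ∀ (η : EuclideanSpace ℝ ι) (s : ι → EuclideanSpace ℝ (Fin n)),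
      (∀ j, s j ∈ A j + B j) → σ * ‖η‖ ≤ ‖∑ j, η j • s j‖)
    {c : ℝ} (hc : c < σ) {y : EuclideanSpace ℝ ι} (hy : WithLp.toLp 2 (fun j => f j x) ≠ y) :
    ∃ h : EuclideanSpace ℝ (Fin n), ‖h‖ = 1 ∧ ∀ᶠ t in 𝓝[>] 0,
      ‖y - WithLp.toLp 2 (fun j => f j (x + t • h))‖ <
        ‖y - WithLp.toLp 2 (fun j => f j x)‖ - c * t := by
  set a : EuclideanSpace ℝ ι := y - WithLp.toLp 2 (fun j => f j x)
  have ha : 0 < ‖a‖ := norm_pos_iff.2 (sub_ne_zero.2 hy.symm)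
  obtain ⟨h, hh, hslope⟩ := exists_norm_eq_one_le_inner_of_isQuasidiffE hq hσ hS
    (η := ‖a‖⁻¹ • a) (by simp [norm_smul, ha.ne'])
  rw [real_inner_smul_left, inv_mul_eq_div, le_div_iff₀ ha] at hslope
  have hrate : ⟪a, -WithLp.toLp 2 fun j => df j h⟫ < -c * ‖a‖ := by
    rw [inner_neg_right]
    nlinarith
  refine ⟨h, hh, ?_⟩
  have hg := (hasDerivWithinAt_Ioi_of_hasDiniDerivE (fun j => (hq j).2.2.2.2.2.2.1) h).const_sub y
  simpa using eventually_norm_lt_sub_of_hasDerivWithinAt hg (by simpa using ha.ne')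
    (by simpa using hrate)

theorem eventually_descent_of_isQuasidiffE {ι P : Type*} [Fintype ι]
    [TopologicalSpace P] {f : ι → EuclideanSpace ℝ (Fin n) → P → ℝ}
    {df : ι → EuclideanSpace ℝ (Fin n) → P → EuclideanSpace ℝ (Fin n) → ℝ}
    {A B : ι → EuclideanSpace ℝ (Fin n) → P → Set (EuclideanSpace ℝ (Fin n))}
    {xb : EuclideanSpace ℝ (Fin n)} {pb : P}
    (hquasi : ∀ᶠ q in 𝓝 (xb, pb), ∀ j,
      IsQuasidiffE (fun x => f j x q.2) q.1 (df j q.1 q.2) (A j q.1 q.2) (B j q.1 q.2))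
    (hA : ∀ j, ∀ ε > 0, ∀ᶠ q in 𝓝 (xb, pb), A j q.1 q.2 ⊆ thickening ε (A j xb pb))
    (hB : ∀ j, ∀ ε > 0, ∀ᶠ q in 𝓝 (xb, pb), B j q.1 q.2 ⊆ thickening ε (B j xb pb))
    (hrank : ∀ v w : ι → EuclideanSpace ℝ (Fin n),
      (∀ j, v j ∈ A j xb pb) → (∀ j, w j ∈ B j xb pb) →
      LinearIndependent ℝ (fun j => v j + w j)) :
    ∃ c > 0, ∀ᶠ q in 𝓝 (xb, pb), ∀ y : EuclideanSpace ℝ ι,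
      WithLp.toLp 2 (fun j => f j q.1 q.2) ≠ y → ∀ r > 0, ∃ ζ, dist ζ q.1 < r ∧
        dist y (WithLp.toLp 2 fun j => f j ζ q.2) + c * dist ζ q.1 <
          dist y (WithLp.toLp 2 fun j => f j q.1 q.2) := by
  have hq₀ := hquasi.self_of_nhds
  obtain ⟨σ, hσ, hS⟩ := exists_pos_mul_norm_le_norm_sum_smul
    (S := fun j => A j xb pb + B j xb pb)
    (fun j => (hq₀ j).2.2.2.2.1.add (hq₀ j).2.2.2.2.2.1) fun s hs => by
      choose v hv w hw hvw using fun j => mem_add.1 (hs j)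
      simpa only [hvw] using hrank v w hv hw
  obtain ⟨ε, hε, hσε⟩ : ∃ ε > 0, σ / 2 ≤ σ - Fintype.card ι * (ε + ε) := by
    refine ⟨σ / (4 * (Fintype.card ι + 1)), by positivity, ?_⟩
    have : (0 : ℝ) ≤ Fintype.card ι := Nat.cast_nonneg _
    field_simp
    nlinarith
  refine ⟨σ / 4, by positivity, ?_⟩
  filter_upwards [hquasi, eventually_all.2 fun j => hA j ε hε,
    eventually_all.2 fun j => hB j ε hε] with q hq hqA hqB y hy r hr
  have hSq (η : EuclideanSpace ℝ ι) (s : ι → EuclideanSpace ℝ (Fin n))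
      (hs : ∀ j, s j ∈ A j q.1 q.2 + B j q.1 q.2) : σ / 2 * ‖η‖ ≤ ‖∑ j, η j • s j‖ := by
    refine (mul_le_mul_of_nonneg_right hσε (norm_nonneg _)).trans
      (mul_norm_le_norm_sum_smul_of_mem_thickening hS η fun j => ?_)
    obtain ⟨v, hv, w, hw, hvw⟩ := hs j
    exact hvw ▸ add_mem_thickening_add (hqA j hv) (hqB j hw)
  obtain ⟨h, hh, hev⟩ := exists_descent_direction_of_isQuasidiffE hq (half_pos hσ) hSq
    (c := σ / 4) (by linarith) hy
  obtain ⟨t, ht, htr⟩ := (hev.and (Ioo_mem_nhdsGT hr)).exists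
  have hdist : dist (q.1 + t • h) q.1 = t := by
    rw [dist_eq_norm, add_sub_cancel_left, norm_smul, hh, mul_one, Real.norm_of_nonneg htr.1.le]
  refine ⟨q.1 + t • h, hdist.trans_lt htr.2, ?_⟩
  rw [hdist, dist_eq_norm, dist_eq_norm]
  linarith

end Quasidifferential

theorem full_rank_quasidiff_sum_implies_metric_regularity_general
    (n l : ℕ) {P : Type*} [MetricSpace P]
    (f : Fin l → EuclideanSpace ℝ (Fin n) → P → ℝ)
    (hfcont : ∀ j, Continuous fun q : EuclideanSpace ℝ (Fin n) × P => f j q.1 q.2)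
    (xb : EuclideanSpace ℝ (Fin n)) (pb : P)
    (U : Set (EuclideanSpace ℝ (Fin n) × P)) (hU : U ∈ 𝓝 (xb, pb))
    (df : Fin l → EuclideanSpace ℝ (Fin n) → P → EuclideanSpace ℝ (Fin n) → ℝ)
    (A B : Fin l → EuclideanSpace ℝ (Fin n) → P → Set (EuclideanSpace ℝ (Fin n)))
    (hquasi : ∀ j, ∀ q ∈ U,
      IsQuasidiffE (fun x => f j x q.2) q.1 (df j q.1 q.2) (A j q.1 q.2) (B j q.1 q.2))
    (hosc : ∀ j,
      (∀ V : Set (EuclideanSpace ℝ (Fin n)), IsOpen V → A j xb pb ⊆ V →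
        ∃ δ > (0 : ℝ), ∀ x p, dist (x, p) (xb, pb) < δ → A j x p ⊆ V) ∧
      (∀ V : Set (EuclideanSpace ℝ (Fin n)), IsOpen V → B j xb pb ⊆ V →
        ∃ δ > (0 : ℝ), ∀ x p, dist (x, p) (xb, pb) < δ → B j x p ⊆ V))
    (hrank : ∀ v w : Fin l → EuclideanSpace ℝ (Fin n),
      (∀ j, v j ∈ A j xb pb) → (∀ j, w j ∈ B j xb pb) →
      LinearIndependent ℝ (fun j => v j + w j)) :
    ∃ K > (0 : ℝ), ∃ δ > (0 : ℝ), ∀ p : P, dist p pb < δ →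
      ∃ r > (0 : ℝ), ∀ x : EuclideanSpace ℝ (Fin n), ‖x - xb‖ ≤ r →
        ∀ y : EuclideanSpace ℝ (Fin l),
          ‖y - (show EuclideanSpace ℝ (Fin l) from WithLp.toLp 2 (fun j => f j xb p))‖ ≤ r →
          EMetric.infEdist x {ξ : EuclideanSpace ℝ (Fin n) | ∀ j, f j ξ p = y j} ≤
            ENNReal.ofReal (K * ‖y - (show EuclideanSpace ℝ (Fin l) from WithLp.toLp 2 (fun j => f j x p))‖) := by
  have hthick (S : Fin l → EuclideanSpace ℝ (Fin n) → P → Set (EuclideanSpace ℝ (Fin n)))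
      (hS : ∀ j, ∀ V, IsOpen V → S j xb pb ⊆ V →
        ∃ δ > (0 : ℝ), ∀ x p, dist (x, p) (xb, pb) < δ → S j x p ⊆ V) (j) (ε : ℝ) (hε : 0 < ε) :
      ∀ᶠ q in 𝓝 (xb, pb), S j q.1 q.2 ⊆ thickening ε (S j xb pb) :=
    eventually_subset_thickening_of_forall_isOpen
      (G := fun q : EuclideanSpace ℝ (Fin n) × P => S j q.1 q.2)
      (fun V hV hsub => by simpa only [Prod.forall] using hS j V hV hsub) hε
  obtain ⟨c, hc, hdesc⟩ := eventually_descent_of_isQuasidiffE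
    (mem_of_superset hU fun q hq j => hquasi j q hq)
    (hthick A fun j => (hosc j).1) (hthick B fun j => (hosc j).2) hrank
  obtain ⟨δ, hδ, hreg⟩ := exists_metricRegularity_of_eventually_descent
    (F := fun x p => (WithLp.toLp 2 fun j => f j x p : EuclideanSpace ℝ (Fin l)))
    ((PiLp.continuous_toLp 2 _).comp (continuous_pi hfcont)) hc hdesc
  refine ⟨c⁻¹, inv_pos.2 hc, δ, hδ, fun p hp => ?_⟩
  obtain ⟨r, hr, hreg⟩ := hreg p hp
  refine ⟨r, hr, fun x hx y hy => ?_⟩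
  have hfiber : {ξ | ∀ j, f j ξ p = y j} = {ξ | WithLp.toLp 2 (fun j => f j ξ p) = y} := by
    ext ξ
    simp [WithLp.ext_iff, funext_iff]
  rw [hfiber, inv_mul_eq_div]
  exact hreg x (by rwa [dist_eq_norm]) y (by rwa [dist_eq_norm])

/-- if every `l×n` matrix whose rows are chosen from the quasidifferential sums
of the components of `F = (f₁,…,f_l)` at `(xb, pb)` has full rank `l ≤ n` (i.e. the chosen
rows are always linearly independent), then `F(·,p)` is metrically regular near
`(xb, F(xb,p))` with a uniform norm bound `K` for all `p` near `pb`. -/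
theorem full_rank_quasidiff_sum_implies_metric_regularity
    (n l : ℕ) (hln : l ≤ n) {P : Type*} [MetricSpace P]
    (f : Fin l → EuclideanSpace ℝ (Fin n) → P → ℝ)
    (hfcont : ∀ j, Continuous fun q : EuclideanSpace ℝ (Fin n) × P => f j q.1 q.2)
    (xb : EuclideanSpace ℝ (Fin n)) (pb : P)
    (U : Set (EuclideanSpace ℝ (Fin n) × P)) (hU : U ∈ 𝓝 (xb, pb))
    (df : Fin l → EuclideanSpace ℝ (Fin n) → P → EuclideanSpace ℝ (Fin n) → ℝ)
    (A B : Fin l → EuclideanSpace ℝ (Fin n) → P → Set (EuclideanSpace ℝ (Fin n)))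
    (hquasi : ∀ j, ∀ q ∈ U,
      IsQuasidiffE (fun x => f j x q.2) q.1 (df j q.1 q.2) (A j q.1 q.2) (B j q.1 q.2))
    (hosc : ∀ j,
      (∀ V : Set (EuclideanSpace ℝ (Fin n)), IsOpen V → A j xb pb ⊆ V →
        ∃ δ > (0 : ℝ), ∀ x p, dist (x, p) (xb, pb) < δ → A j x p ⊆ V) ∧
      (∀ V : Set (EuclideanSpace ℝ (Fin n)), IsOpen V → B j xb pb ⊆ V →
        ∃ δ > (0 : ℝ), ∀ x p, dist (x, p) (xb, pb) < δ → B j x p ⊆ V))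
    (hrank : ∀ v w : Fin l → EuclideanSpace ℝ (Fin n),
      (∀ j, v j ∈ A j xb pb) → (∀ j, w j ∈ B j xb pb) →
      LinearIndependent ℝ (fun j => v j + w j)) :
    ∃ K > (0 : ℝ), ∃ δ > (0 : ℝ), ∀ p : P, dist p pb < δ →
      ∃ r > (0 : ℝ), ∀ x : EuclideanSpace ℝ (Fin n), ‖x - xb‖ ≤ r →
        ∀ y : EuclideanSpace ℝ (Fin l),
          ‖y - (show EuclideanSpace ℝ (Fin l) from WithLp.toLp 2 (fun j => f j xb p))‖ ≤ r →
          EMetric.infEdist x {ξ : EuclideanSpace ℝ (Fin n) | ∀ j, f j ξ p = y j} ≤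
            ENNReal.ofReal (K * ‖y - (show EuclideanSpace ℝ (Fin l) from WithLp.toLp 2 (fun j => f j x p))‖) :=
  full_rank_quasidiff_sum_implies_metric_regularity_general n l f hfcont xb pb U hU df A B hquasi
    hosc hrank
end

section
/- Let f : ℝⁿ → ℝ be Lipschitz continuous on a neighborhood U of a point x and quasidifferentiable at every point of U, with a quasidifferential mapping u ↦ [A(u), B(u)] defined on U that is outer semicontinuous at x. Then ∂_Cl f(x) ⊆ A(x) + B(x), where ∂_Cl f(x) is the Clarke subdifferential of f at x. -/
open Filter Topology Set Pointwise RealInnerProductSpace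

/-- The Clarke generalized directional derivative
`f°(x,h) = limsup_{u→x, t→0+} (f(u+th) − f(u))/t`. -/
noncomputable def clarkeDirDeriv {n : ℕ} (f : EuclideanSpace ℝ (Fin n) → ℝ)
    (x h : EuclideanSpace ℝ (Fin n)) : ℝ :=
  Filter.limsup (fun q : EuclideanSpace ℝ (Fin n) × ℝ => (f (q.1 + q.2 • h) - f q.1) / q.2)
    ((𝓝 x) ×ˢ (𝓝[>] (0 : ℝ)))

/-! Near `x` the Dini derivative satisfies `f'(u,h) ≤ σ_{A(u)}(h) + σ_{B(u)}(h)`, where `σ_S` is the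
support function of `S`, and outer semicontinuity bounds this by `σ_{A(x)}(h) + σ_{B(x)}(h) + ε`.
A mean value inequality for Dini derivatives along the segments `[u, u + t h]` transfers the bound
to the difference quotients defining `f°(x,h)`, so `f°(x,·) ≤ σ_{A(x)+B(x)}`. Since `A(x) + B(x)`
is convex and compact, Hahn–Banach separation shows that every `v` with `⟪v,·⟫ ≤ f°(x,·)` lies
in it. -/

open Bornology Metric

noncomputable def supportFunction {E : Type*} [NormedAddCommGroup E] [InnerProductSpace ℝ E]
    (S : Set E) (h : E) : ℝ :=
  sSup ((fun v => ⟪v, h⟫) '' S)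

section SupportFunction

variable {E : Type*} [NormedAddCommGroup E] [InnerProductSpace ℝ E]

lemma isBounded_image_inner {S : Set E} (hS : IsBounded S) (h : E) :
    IsBounded ((fun v => ⟪v, h⟫) '' S) :=
  (innerSLFlip ℝ h).lipschitz.isBounded_image hS

lemma inner_le_supportFunction {S : Set E} (hS : IsBounded S) {v : E} (hv : v ∈ S) (h : E) :
    ⟪v, h⟫ ≤ supportFunction S h :=
  le_csSup (isBounded_image_inner hS h).bddAbove (mem_image_of_mem _ hv)

lemma supportFunction_le {S : Set E} (hS : S.Nonempty) {h : E} {c : ℝ}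
    (hc : ∀ v ∈ S, ⟪v, h⟫ ≤ c) : supportFunction S h ≤ c :=
  csSup_le (hS.image _) (forall_mem_image.2 hc)

lemma supportFunction_add {A B : Set E} (hAne : A.Nonempty) (hA : IsBounded A)
    (hBne : B.Nonempty) (hB : IsBounded B) (h : E) :
    supportFunction (A + B) h = supportFunction A h + supportFunction B h := by
  have himage : (fun v => ⟪v, h⟫) '' (A + B) = (fun v => ⟪v, h⟫) '' A + (fun v => ⟪v, h⟫) '' B :=
    image_add (innerSLFlip ℝ h)
  rw [supportFunction, himage]
  exact csSup_add (hAne.image _) (isBounded_image_inner hA h).bddAbove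
    (hBne.image _) (isBounded_image_inner hB h).bddAbove

lemma supportFunction_le_of_subset_thickening {S T : Set E} (hS : IsBounded S)
    (hT : T.Nonempty) {η : ℝ} (hTS : T ⊆ thickening η S) (h : E) :
    supportFunction T h ≤ supportFunction S h + η * ‖h‖ := by
  refine supportFunction_le hT fun v hv => ?_
  obtain ⟨a, ha, hva⟩ := mem_thickening_iff.1 (hTS hv)
  calc ⟪v, h⟫ = ⟪a, h⟫ + ⟪v - a, h⟫ := by rw [← inner_add_left, add_sub_cancel]
    _ ≤ supportFunction S h + ‖v - a‖ * ‖h‖ :=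
      add_le_add (inner_le_supportFunction hS ha h) (real_inner_le_norm _ _)
    _ ≤ supportFunction S h + η * ‖h‖ := by
      gcongr
      exact (dist_eq_norm v a ▸ hva).le

lemma eventually_supportFunction_le_add {X : Type*} [TopologicalSpace X] {S : X → Set E}
    {x : X} (hne : ∀ᶠ u in 𝓝 x, (S u).Nonempty) (hb : IsBounded (S x))
    (hosc : ∀ V, IsOpen V → S x ⊆ V → ∀ᶠ u in 𝓝 x, S u ⊆ V) (h : E) {ε : ℝ} (hε : 0 < ε) :
    ∀ᶠ u in 𝓝 x, supportFunction (S u) h ≤ supportFunction (S x) h + ε := by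
  set η := ε / (‖h‖ + 1)
  have hη : 0 < η := by positivity
  have hηh : η * ‖h‖ ≤ ε := by
    rw [div_mul_eq_mul_div, div_le_iff₀ (by positivity)]
    nlinarith [norm_nonneg h]
  filter_upwards [hne, hosc _ isOpen_thickening (self_subset_thickening hη _)] with u hu hsub
  linarith [supportFunction_le_of_subset_thickening hb hu hsub h]

lemma mem_of_forall_inner_le_supportFunction [CompleteSpace E] {S : Set E} (hconv : Convex ℝ S)
    (hclosed : IsClosed S) (hne : S.Nonempty) {v : E}
    (hv : ∀ h, ⟪v, h⟫ ≤ supportFunction S h) : v ∈ S := by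
  by_contra hvS
  obtain ⟨φ, c, hSc, hcv⟩ := geometric_hahn_banach_closed_point hconv hclosed hvS
  obtain ⟨w, rfl⟩ := (InnerProductSpace.toDual ℝ E).surjective φ
  simp only [InnerProductSpace.toDual_apply_apply] at hSc hcv
  have hσ : supportFunction S w ≤ c :=
    supportFunction_le hne fun a ha => real_inner_comm w a ▸ (hSc a ha).le
  linarith [hv w, real_inner_comm w v]

end SupportFunction

lemma IsQuasidiffE.hasDiniDerivE {n : ℕ} {f : EuclideanSpace ℝ (Fin n) → ℝ}
    {u : EuclideanSpace ℝ (Fin n)} {f' : EuclideanSpace ℝ (Fin n) → ℝ}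
    {A B : Set (EuclideanSpace ℝ (Fin n))} (hq : IsQuasidiffE f u f' A B) :
    HasDiniDerivE f u f' :=
  hq.2.2.2.2.2.2.1

lemma IsQuasidiffE.le_supportFunction_add {n : ℕ} {f : EuclideanSpace ℝ (Fin n) → ℝ}
    {u : EuclideanSpace ℝ (Fin n)} {f' : EuclideanSpace ℝ (Fin n) → ℝ}
    {A B : Set (EuclideanSpace ℝ (Fin n))} (hq : IsQuasidiffE f u f' A B)
    (h : EuclideanSpace ℝ (Fin n)) : f' h ≤ supportFunction A h + supportFunction B h := by
  obtain ⟨-, hBne, -, -, -, hBc, -, hrep⟩ := hq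
  rw [hrep h]
  exact add_le_add_right (csInf_le_csSup (hBne.image _)
    (isBounded_image_inner hBc.isBounded h).bddBelow
    (isBounded_image_inner hBc.isBounded h).bddAbove) _

lemma sub_le_mul_of_rightDini_le {g g' : ℝ → ℝ} {a b C : ℝ} (hab : a ≤ b)
    (hg : ContinuousOn g (Icc a b))
    (hg' : ∀ s ∈ Ico a b,
      Tendsto (fun τ : ℝ => (g (s + τ) - g s) / τ) (𝓝[>] 0) (𝓝 (g' s)))
    (hC : ∀ s ∈ Ico a b, g' s ≤ C) : g b - g a ≤ C * (b - a) := by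
  have hfence : ∀ ⦃y⦄, y ∈ Icc a b → g y ≤ g a + C * (y - a) := by
    refine image_le_of_liminf_slope_right_le_deriv_boundary (B' := fun _ => C) hg (by simp) (by fun_prop)
      (fun s _ => ?_) fun s hs r hr => ?_
    · simpa using (((hasDerivWithinAt_id s (Ici s)).sub_const a).const_mul C).const_add (g a)
    · have hslope : Tendsto (slope g s) (𝓝[>] s) (𝓝 (g' s)) := by
        have hshift : Tendsto (fun z => z - s) (𝓝[>] s) (𝓝[>] 0) :=
          tendsto_nhdsWithin_of_tendsto_nhds_of_eventually_within _
            (((continuous_sub_right s).tendsto' s 0 (sub_self s)).mono_left nhdsWithin_le_nhds)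
            (eventually_nhdsWithin_of_forall fun z hz => mem_Ioi.2 (sub_pos.2 hz))
        refine ((hg' s hs).comp hshift).congr fun z => ?_
        simp [slope_def_field]
      exact (hslope.eventually_lt_const ((hC s hs).trans_lt hr)).frequently
  linarith [hfence (right_mem_Icc.2 hab)]

section Segments

variable {E : Type*} [SeminormedAddCommGroup E] [NormedSpace ℝ E]

lemma eventually_forall_segment_mem {x : E} {W : Set E} (hW : W ∈ 𝓝 x) (h : E) :
    ∀ᶠ q : E × ℝ in 𝓝 x ×ˢ 𝓝[>] 0, 0 < q.2 ∧ ∀ s ∈ Icc 0 q.2, q.1 + s • h ∈ W := by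
  obtain ⟨r, hr, hball⟩ := Metric.mem_nhds_iff.1 hW
  have hu : ∀ᶠ u in 𝓝 x, u ∈ ball x (r / 2) := ball_mem_nhds x (half_pos hr)
  have hlen : Tendsto (fun t : ℝ => t * ‖h‖) (𝓝[>] 0) (𝓝 0) :=
    ((continuous_mul_const ‖h‖).tendsto' 0 0 (zero_mul _)).mono_left nhdsWithin_le_nhds
  have ht : ∀ᶠ t in 𝓝[>] (0 : ℝ), 0 < t ∧ t * ‖h‖ < r / 2 :=
    eventually_mem_nhdsWithin.and (hlen.eventually (gt_mem_nhds (half_pos hr)))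
  filter_upwards [hu.prod_mk ht] with ⟨u, t⟩ ⟨hu, ht_pos, ht_len⟩
  refine ⟨ht_pos, fun s hs => hball ?_⟩
  rw [mem_ball, dist_eq_norm] at hu ⊢
  calc ‖u + s • h - x‖ = ‖(u - x) + s • h‖ := by abel_nf
    _ ≤ ‖u - x‖ + ‖s • h‖ := norm_add_le _ _
    _ = ‖u - x‖ + s * ‖h‖ := by rw [norm_smul, Real.norm_of_nonneg hs.1]
    _ < r := by nlinarith [norm_nonneg h, hs.2]

lemma LipschitzOnWith.neg_mul_norm_le_div {f : E → ℝ} {U : Set E} {L : NNReal}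
    (hf : LipschitzOnWith L f U) {u h : E} {t : ℝ} (ht : 0 < t) (hu : u ∈ U)
    (hut : u + t • h ∈ U) : -(L * ‖h‖) ≤ (f (u + t • h) - f u) / t := by
  have hdist := hf.dist_le_mul _ hut _ hu
  rw [Real.dist_eq, dist_eq_norm, add_sub_cancel_left, norm_smul, Real.norm_of_nonneg ht.le]
    at hdist
  rw [le_div_iff₀ ht]
  nlinarith [neg_abs_le (f (u + t • h) - f u)]

end Segments

lemma clarkeDirDeriv_le_of_eventually_dini_le {n : ℕ} {f : EuclideanSpace ℝ (Fin n) → ℝ}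
    {x h : EuclideanSpace ℝ (Fin n)} {U : Set (EuclideanSpace ℝ (Fin n))} (hU : U ∈ 𝓝 x)
    {L : NNReal} (hLip : LipschitzOnWith L f U) {g' : EuclideanSpace ℝ (Fin n) → ℝ} {C : ℝ}
    (hg' : ∀ᶠ u in 𝓝 x,
      Tendsto (fun t : ℝ => (f (u + t • h) - f u) / t) (𝓝[>] 0) (𝓝 (g' u)) ∧ g' u ≤ C) :
    clarkeDirDeriv f x h ≤ C := by
  have hcob : IsCoboundedUnder (· ≤ ·) (𝓝 x ×ˢ 𝓝[>] 0)
      (fun q : EuclideanSpace ℝ (Fin n) × ℝ => (f (q.1 + q.2 • h) - f q.1) / q.2) := by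
    refine isCoboundedUnder_le_of_eventually_le _ (x := -(L * ‖h‖)) ?_
    filter_upwards [eventually_forall_segment_mem hU h] with ⟨u, t⟩ ⟨ht, hseg⟩
    exact hLip.neg_mul_norm_le_div ht (by simpa using hseg 0 ⟨le_rfl, ht.le⟩)
      (hseg t ⟨ht.le, le_rfl⟩)
  refine limsup_le_of_le hcob ?_
  filter_upwards [eventually_forall_segment_mem (inter_mem hU hg') h] with ⟨u, t⟩ ⟨ht, hseg⟩
  have hcont : ContinuousOn (fun s : ℝ => f (u + s • h)) (Icc 0 t) :=
    hLip.continuousOn.comp (by fun_prop) fun s hs => (hseg s hs).1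
  have hdini : ∀ s ∈ Ico 0 t, Tendsto (fun τ : ℝ => (f (u + (s + τ) • h) - f (u + s • h)) / τ)
      (𝓝[>] 0) (𝓝 (g' (u + s • h))) := fun s hs => by
    simpa only [add_smul, add_assoc] using (hseg s (Ico_subset_Icc_self hs)).2.1
  have hmvt := sub_le_mul_of_rightDini_le ht.le hcont hdini
    fun s hs => (hseg s (Ico_subset_Icc_self hs)).2.2
  rw [div_le_iff₀ ht]
  simpa using hmvt

lemma clarkeDirDeriv_le_supportFunction_add {n : ℕ} {f : EuclideanSpace ℝ (Fin n) → ℝ}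
    {x : EuclideanSpace ℝ (Fin n)} {U : Set (EuclideanSpace ℝ (Fin n))} (hU : U ∈ 𝓝 x)
    {L : NNReal} (hLip : LipschitzOnWith L f U)
    {d : EuclideanSpace ℝ (Fin n) → EuclideanSpace ℝ (Fin n) → ℝ}
    {A B : EuclideanSpace ℝ (Fin n) → Set (EuclideanSpace ℝ (Fin n))}
    (hquasi : ∀ u ∈ U, IsQuasidiffE f u (d u) (A u) (B u))
    (hoscA : ∀ V, IsOpen V → A x ⊆ V → ∀ᶠ u in 𝓝 x, A u ⊆ V)
    (hoscB : ∀ V, IsOpen V → B x ⊆ V → ∀ᶠ u in 𝓝 x, B u ⊆ V) (h : EuclideanSpace ℝ (Fin n)) :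
    clarkeDirDeriv f x h ≤ supportFunction (A x) h + supportFunction (B x) h := by
  obtain ⟨-, -, -, -, hAc, hBc, -⟩ := hquasi x (mem_of_mem_nhds hU)
  have hq : ∀ᶠ u in 𝓝 x, IsQuasidiffE f u (d u) (A u) (B u) := eventually_of_mem hU hquasi
  refine le_of_forall_pos_le_add fun ε hε => clarkeDirDeriv_le_of_eventually_dini_le hU hLip
    (g' := fun u => d u h) ?_
  filter_upwards [hq,
    eventually_supportFunction_le_add (hq.mono fun _ hu => hu.1) hAc.isBounded hoscA h
      (half_pos hε),
    eventually_supportFunction_le_add (hq.mono fun _ hu => hu.2.1) hBc.isBounded hoscB h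
      (half_pos hε)] with u hu hAu hBu
  exact ⟨hu.hasDiniDerivE h, by linarith [hu.le_supportFunction_add h]⟩

/-- for a locally Lipschitz function with an outer semicontinuous
quasidifferential mapping, the Clarke subdifferential is contained in the
quasidifferential sum `A(x) + B(x)`. -/
theorem clarke_subdiff_subset_quasidiff_sum
    (n : ℕ) (f : EuclideanSpace ℝ (Fin n) → ℝ) (x : EuclideanSpace ℝ (Fin n))
    (U : Set (EuclideanSpace ℝ (Fin n))) (hU : U ∈ 𝓝 x)
    (L : NNReal) (hLip : LipschitzOnWith L f U)
    (d : EuclideanSpace ℝ (Fin n) → EuclideanSpace ℝ (Fin n) → ℝ)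
    (A B : EuclideanSpace ℝ (Fin n) → Set (EuclideanSpace ℝ (Fin n)))
    (hquasi : ∀ u ∈ U, IsQuasidiffE f u (d u) (A u) (B u))
    (hoscA : ∀ V : Set (EuclideanSpace ℝ (Fin n)), IsOpen V → A x ⊆ V →
      ∃ δ > (0 : ℝ), ∀ u, ‖u - x‖ < δ → A u ⊆ V)
    (hoscB : ∀ V : Set (EuclideanSpace ℝ (Fin n)), IsOpen V → B x ⊆ V →
      ∃ δ > (0 : ℝ), ∀ u, ‖u - x‖ < δ → B u ⊆ V) :
    ∀ v : EuclideanSpace ℝ (Fin n),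
      (∀ h : EuclideanSpace ℝ (Fin n), ⟪v, h⟫ ≤ clarkeDirDeriv f x h) → v ∈ A x + B x := by
  have hosc : ∀ S : EuclideanSpace ℝ (Fin n) → Set (EuclideanSpace ℝ (Fin n)),
      (∀ V, IsOpen V → S x ⊆ V → ∃ δ > (0 : ℝ), ∀ u, ‖u - x‖ < δ → S u ⊆ V) →
      ∀ V, IsOpen V → S x ⊆ V → ∀ᶠ u in 𝓝 x, S u ⊆ V := fun S hS V hV hSV =>
    Metric.eventually_nhds_iff.2 (by simpa only [dist_eq_norm] using hS V hV hSV)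
  intro v hv
  obtain ⟨hAne, hBne, hAconv, hBconv, hAc, hBc, -⟩ := hquasi x (mem_of_mem_nhds hU)
  refine mem_of_forall_inner_le_supportFunction (hAconv.add hBconv) (hAc.add hBc).isClosed
    (hAne.add hBne) fun h => ?_
  rw [supportFunction_add hAne hAc.isBounded hBne hBc.isBounded]
  exact (hv h).trans
    (clarkeDirDeriv_le_supportFunction_add hU hLip hquasi (hosc A hoscA) (hosc B hoscB) h)
end

section
/- Let F : ℝ² → ℝ be defined by F(x₁, x₂) = |x₁| − |x₂|, where ℝ² carries the Euclidean norm. Then for every K > 1 there exists r > 0 such that d(x, F⁻¹(y)) ≤ K·|y − F(x)| for all x ∈ ℝ² with ‖x‖ ≤ r and all y ∈ ℝ with |y| ≤ r; in particular, F is metrically regular near the point ((0,0), 0). -/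
open Set Metric

/-! For `F ξ = |ξ i| - |ξ j|` the estimate holds globally with constant `1`. If `F x ≤ y`,
moving `x i` away from `0` by `y - F x` raises `|x i|` by exactly that amount; if `F x > y`, do
the same to `x j`. Either way the moved point lies on `F⁻¹(y)` at distance `|y - F x|` from `x`. -/

lemma exists_abs_eq_and_abs_add_eq (a : ℝ) {δ : ℝ} (hδ : 0 ≤ δ) :
    ∃ c : ℝ, |c| = δ ∧ |a + c| = |a| + δ := by
  rcases le_total 0 a with ha | ha
  · exact ⟨δ, abs_of_nonneg hδ, by rw [abs_of_nonneg ha, abs_of_nonneg (add_nonneg ha hδ)]⟩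
  · exact ⟨-δ, by rw [abs_neg, abs_of_nonneg hδ], by
      rw [abs_of_nonpos ha, abs_of_nonpos (by linarith)]; ring⟩

section

variable {ι : Type*} [Fintype ι] [DecidableEq ι] {i j : ι}

lemma infDist_setOf_abs_sub_abs_eq_le_of_le (hij : i ≠ j) (x : EuclideanSpace ℝ ι) {y : ℝ}
    (hy : |x i| - |x j| ≤ y) :
    infDist x {ξ : EuclideanSpace ℝ ι | |ξ i| - |ξ j| = y} ≤ y - (|x i| - |x j|) := by
  obtain ⟨c, hc, hxc⟩ := exists_abs_eq_and_abs_add_eq (x i) (sub_nonneg.2 hy)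
  calc infDist x {ξ : EuclideanSpace ℝ ι | |ξ i| - |ξ j| = y}
      ≤ dist x (x + EuclideanSpace.single i c) :=
        infDist_le_dist_of_mem (by simp [hij.symm, hxc]; ring)
    _ = y - (|x i| - |x j|) := by
        rw [dist_self_add_right, PiLp.norm_single, Real.norm_eq_abs, hc]

lemma infDist_setOf_abs_sub_abs_eq_le (hij : i ≠ j) (x : EuclideanSpace ℝ ι) (y : ℝ) :
    infDist x {ξ : EuclideanSpace ℝ ι | |ξ i| - |ξ j| = y} ≤ |y - (|x i| - |x j|)| := by
  rcases le_total (|x i| - |x j|) y with hy | hy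
  · simpa [abs_of_nonneg (sub_nonneg.2 hy)] using infDist_setOf_abs_sub_abs_eq_le_of_le hij x hy
  · have hset : {ξ : EuclideanSpace ℝ ι | |ξ i| - |ξ j| = y} =
        {ξ : EuclideanSpace ℝ ι | |ξ j| - |ξ i| = -y} := by
      ext ξ
      change _ = _ ↔ _ = _
      constructor <;> intro h <;> linarith
    rw [hset, abs_sub_comm, abs_of_nonneg (sub_nonneg.2 hy)]
    linarith [infDist_setOf_abs_sub_abs_eq_le_of_le hij.symm x (y := -y) (by linarith)]

end

/-- the function `F(x₁,x₂) = |x₁| − |x₂|` on the Euclidean plane is metrically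
regular near `((0,0), 0)`; more precisely, for every `K > 1` there is `r > 0` such that
`d(x, F⁻¹(y)) ≤ K·|y − F(x)|` for all `‖x‖ ≤ r` and `|y| ≤ r`. -/
theorem abs_sub_abs_metrically_regular :
    (∀ K : ℝ, 1 < K → ∃ r > (0 : ℝ),
      ∀ x : EuclideanSpace ℝ (Fin 2), ‖x‖ ≤ r → ∀ y : ℝ, |y| ≤ r →
        Metric.infDist x {ξ : EuclideanSpace ℝ (Fin 2) | |ξ 0| - |ξ 1| = y} ≤
          K * |y - (|x 0| - |x 1|)|) ∧
    (∃ K > (0 : ℝ), ∃ r > (0 : ℝ),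
      ∀ x : EuclideanSpace ℝ (Fin 2), ‖x - 0‖ ≤ r →
        ∀ y : ℝ, |y - (|(0 : EuclideanSpace ℝ (Fin 2)) 0| -
            |(0 : EuclideanSpace ℝ (Fin 2)) 1|)| ≤ r →
        Metric.infDist x {ξ : EuclideanSpace ℝ (Fin 2) | |ξ 0| - |ξ 1| = y} ≤
          K * |y - (|x 0| - |x 1|)|) := by
  have hF (x : EuclideanSpace ℝ (Fin 2)) (y : ℝ) :=
    infDist_setOf_abs_sub_abs_eq_le (i := 0) (j := 1) (by decide) x y
  refine ⟨fun K hK => ⟨1, one_pos, fun x _ y _ => ?_⟩, ⟨1, one_pos, 1, one_pos, fun x _ y _ => ?_⟩⟩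
  · exact (hF x y).trans (le_mul_of_one_le_left (abs_nonneg _) hK.le)
  · simpa only [one_mul] using hF x y
end

section
/- In ℝ² with the Euclidean inner product ⟨·,·⟩, there do not exist real numbers μ̲ ≥ 0 and μ̄ ≥ 0 such that (0,0) ∈ {(−1, 1)} − μ̲·conv{(1, −1), (1, 1)} + μ̄·conv{(−1, 1), (1, 1)}, where conv denotes the convex hull and the operations are Minkowski sums and scalar multiples of sets. Consequently, for the problem of minimizing u(x) = −x₁ + x₂ subject to f₁(x) = |x₁| − |x₂| = 0 on ℝ², the quasidifferential-based Lagrange multiplier optimality condition fails at the (non-optimal) point x̄ = (0,0) for the choice of quasidifferentials ∂̲u(x̄) = {(−1,1)}, ∂̄u(x̄) = {(0,0)}, ∂̲f₁(x̄) = {(t,0) : t ∈ [−1,1]}, ∂̄f₁(x̄) = {(0,s) : s ∈ [−1,1]} and the selections v₁* = (1,0) ∈ ∂̲f₁(x̄), w₁* = (0,1) ∈ ∂̄f₁(x̄), since v₁* + ∂̄f₁(x̄) = conv{(1,−1),(1,1)} and ∂̲f₁(x̄) + w₁* = conv{(−1,1),(1,1)}. -/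
open Set Pointwise

lemma hullA : convexHull ℝ {((1 : ℝ), (-1 : ℝ)), ((1 : ℝ), (1 : ℝ))} =
    {p : ℝ × ℝ | p.1 = 1 ∧ p.2 ∈ Icc (-1 : ℝ) 1} := by
  rw [convexHull_pair]
  ext p
  constructor
  · rintro ⟨a, b, ha, hb, hab, rfl⟩
    constructor
    · simp [Prod.fst]
      linarith
    · constructor <;> simp [Prod.snd] <;> nlinarith
  · rintro ⟨h1, h2, h3⟩
    refine ⟨(1 - p.2) / 2, (1 + p.2) / 2, by linarith, by linarith, by ring, ?_⟩
    ext <;> simp [h1] <;> ring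
lemma hullB : convexHull ℝ {((-1 : ℝ), (1 : ℝ)), ((1 : ℝ), (1 : ℝ))} =
    {p : ℝ × ℝ | p.2 = 1 ∧ p.1 ∈ Icc (-1 : ℝ) 1} := by
  rw [convexHull_pair]
  ext p
  constructor
  · rintro ⟨a, b, ha, hb, hab, rfl⟩
    constructor
    · simp [Prod.snd]
      linarith
    · constructor <;> simp [Prod.fst] <;> nlinarith
  · rintro ⟨h1, h2, h3⟩
    refine ⟨(1 - p.1) / 2, (1 + p.1) / 2, by linarith, by linarith, by ring, ?_⟩
    ext <;> simp [h1] <;> ring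

/-- for the problem `min −x₁ + x₂ s.t. |x₁| − |x₂| = 0` with the
quasidifferentials `∂̲u = {(−1,1)}`, `∂̄u = {(0,0)}`, `∂̲f₁ = [−1,1]×{0}`, `∂̄f₁ = {0}×[−1,1]`
and the selections `v₁* = (1,0)`, `w₁* = (0,1)`, one has
`v₁* + ∂̄f₁ = conv{(1,−1),(1,1)}`, `∂̲f₁ + w₁* = conv{(−1,1),(1,1)}`, and there are no
multipliers `μ̲, μ̄ ≥ 0` with
`0 ∈ {(−1,1)} − μ̲·conv{(1,−1),(1,1)} + μ̄·conv{(−1,1),(1,1)}`. -/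
theorem no_quasidiff_lagrange_multipliers :
    (({((1 : ℝ), (0 : ℝ))} : Set (ℝ × ℝ)) + (fun s : ℝ => ((0 : ℝ), s)) '' Icc (-1 : ℝ) 1 =
      convexHull ℝ {((1 : ℝ), (-1 : ℝ)), ((1 : ℝ), (1 : ℝ))}) ∧
    (((fun t : ℝ => (t, (0 : ℝ))) '' Icc (-1 : ℝ) 1) + ({((0 : ℝ), (1 : ℝ))} : Set (ℝ × ℝ)) =
      convexHull ℝ {((-1 : ℝ), (1 : ℝ)), ((1 : ℝ), (1 : ℝ))}) ∧
    ¬ ∃ μ₁ μ₂ : ℝ, 0 ≤ μ₁ ∧ 0 ≤ μ₂ ∧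
      ((0, 0) : ℝ × ℝ) ∈
        ({((-1 : ℝ), (1 : ℝ))} : Set (ℝ × ℝ))
          - μ₁ • convexHull ℝ {((1 : ℝ), (-1 : ℝ)), ((1 : ℝ), (1 : ℝ))}
          + μ₂ • convexHull ℝ {((-1 : ℝ), (1 : ℝ)), ((1 : ℝ), (1 : ℝ))} := by
  refine ⟨?_, ?_, ?_⟩
  · rw [hullA]
    ext p
    simp only [singleton_add, image_add_left, mem_preimage, mem_image, mem_Icc, mem_setOf_eq]
    constructor
    · rintro ⟨s, hs, h⟩
      have h1 : p.1 = 1 := by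
        have := congrArg Prod.fst h
        simp at this; linarith
      have h2 : p.2 = s := by
        have := congrArg Prod.snd h
        exact (by simpa using this : _ = _).symm
      exact ⟨h1, by rw [h2]; exact ⟨hs.1, hs.2⟩⟩
    · rintro ⟨h1, h2, h3⟩
      exact ⟨p.2, ⟨h2, h3⟩, by ext <;> simp [h1]⟩
  · rw [hullB]
    ext p
    simp only [add_singleton, image_add_right, mem_image, mem_Icc, mem_setOf_eq]
    constructor
    · rintro ⟨t, ht, h⟩
      have h1 : p.2 = 1 := by
        have := congrArg Prod.snd h
        simp at this; linarith
      have h2 : p.1 = t := by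
        have := congrArg Prod.fst h
        exact (by simpa using this : _ = _).symm
      exact ⟨h1, by rw [h2]; exact ⟨ht.1, ht.2⟩⟩
    · rintro ⟨h1, h2, h3⟩
      exact ⟨p.1, ⟨h2, h3⟩, by ext <;> simp [h1]⟩
  · rintro ⟨μ₁, μ₂, hμ₁, hμ₂, hmem⟩
    rw [hullA, hullB] at hmem
    obtain ⟨q, hq, b, hb, hqb⟩ := hmem
    obtain ⟨r, hr, a, ha, hra⟩ := hq
    obtain ⟨a', ⟨ha1, ha2l, ha2u⟩, rfl⟩ := ha
    obtain ⟨b', ⟨hb1, hb2l, hb2u⟩, rfl⟩ := hb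
    simp only [mem_singleton_iff] at hr
    subst hr
    have e1 := congrArg Prod.fst hqb
    have e2 := congrArg Prod.snd hqb
    rw [← hra] at e1 e2
    simp [ha1, hb1] at e1 e2
    -- e1 : first coord, e2 : second coord
    nlinarith [mul_le_mul_of_nonneg_left ha2u hμ₁, mul_le_mul_of_nonneg_left hb2u hμ₂]
end
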